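/- arXiv:1605.08711 — 7 statements merged into one kernel-verified Lean document; each statement's English description precedes it below -/
import Mathlib

section
/- Suppose Φ: O_p(k^n) → O_q(k^n) is a graded k-algebra isomorphism of quantum affine spaces, with Φ(x_r) = Σ α_i y_i and Φ(x_s) = Σ β_i y_i. If p_{rs} ≠ 1, then for every index d, α_d = 0 or β_d = 0. -/
open scoped BigOperators

/-- `p` is multiplicatively antisymmetric. -/
def MultAntisym {k : Type*} [Field k] {n : ℕ} (p : Matrix (Fin n) (Fin n) k) : Prop :=
  (∀ i, p i i = 1) ∧ ∀ i j, p i j * p j i = 1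

/-- Defining relations of quantum affine `n`-space: `x i * x j = p i j • (x j * x i)`. -/
inductive QASRel (k : Type*) [Field k] {n : ℕ} (p : Matrix (Fin n) (Fin n) k) :
    FreeAlgebra k (Fin n) → FreeAlgebra k (Fin n) → Prop
  | rel (i j : Fin n) :
      QASRel k p (FreeAlgebra.ι k i * FreeAlgebra.ι k j)
        (p i j • (FreeAlgebra.ι k j * FreeAlgebra.ι k i))

/-- Multiparameter quantum affine `n`-space `O_p(k^n)`. -/
abbrev QAS (k : Type*) [Field k] {n : ℕ} (p : Matrix (Fin n) (Fin n) k) :=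
  RingQuot (QASRel k p)

/-- The canonical degree-one generators of `O_p(k^n)`. -/
noncomputable def qasGen (k : Type*) [Field k] {n : ℕ} (p : Matrix (Fin n) (Fin n) k)
    (i : Fin n) : QAS k p :=
  RingQuot.mkAlgHom k (QASRel k p) (FreeAlgebra.ι k i)

/-- If `Φ` is a graded isomorphism of quantum affine spaces, with
`Φ(x r) = ∑ α i • y i` and `Φ(x s) = ∑ β i • y i`, and `p r s ≠ 1`, then for
each `d` either `α d = 0` or `β d = 0`. -/
theorem qas_graded_iso_coeff_vanish {k : Type*} [Field k] {n : ℕ}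
    (p q : Matrix (Fin n) (Fin n) k) (hp : MultAntisym p) (hq : MultAntisym q)
    (Φ : QAS k p ≃ₐ[k] QAS k q) (r s : Fin n) (α β : Fin n → k)
    (hα : Φ (qasGen k p r) = ∑ i, α i • qasGen k q i)
    (hβ : Φ (qasGen k p s) = ∑ i, β i • qasGen k q i)
    (hrs : p r s ≠ 1) :
    ∀ d, α d = 0 ∨ β d = 0 := by
  intro d
  -- the "evaluation at `y d`" map into `k[X]`
  set f : Fin n → Polynomial k := fun i => if i = d then Polynomial.X else 0 with hf
  have hrel : ∀ ⦃a b : FreeAlgebra k (Fin n)⦄, QASRel k q a b →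
      FreeAlgebra.lift k f a = FreeAlgebra.lift k f b := by
    rintro _ _ ⟨i, j⟩
    simp only [map_mul, map_smul, FreeAlgebra.lift_ι_apply, hf]
    by_cases hi : i = d <;> by_cases hj : j = d <;>
      simp [hi, hj, hq.1 d, Algebra.smul_def]
  set φ : QAS k q →ₐ[k] Polynomial k :=
    RingQuot.liftAlgHom k (s := QASRel k q) ⟨FreeAlgebra.lift k f, hrel⟩ with hφ
  have hgen : ∀ i, φ (qasGen k q i) = f i := by
    intro i
    rw [hφ, qasGen, RingQuot.liftAlgHom_mkAlgHom_apply, FreeAlgebra.lift_ι_apply]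
  have hsum : ∀ γ : Fin n → k, φ (∑ i, γ i • qasGen k q i) = γ d • Polynomial.X := by
    intro γ
    have hterm : ∀ i, φ (γ i • qasGen k q i) = γ i • f i := by
      intro i
      rw [map_smul, hgen]
    rw [map_sum, Finset.sum_congr rfl (fun i _ => hterm i),
      Finset.sum_eq_single d]
    · rw [hf]; simp only [if_pos rfl, if_true]
    · intro b _ hb
      rw [hf]; simp only [if_neg hb, smul_zero]
    · simp
  -- the defining relation in `QAS k p`
  have hrelp : qasGen k p r * qasGen k p s = p r s • (qasGen k p s * qasGen k p r) := by
    have := RingQuot.mkAlgHom_rel k (QASRel.rel (k := k) (p := p) r s)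
    simpa [qasGen, map_mul, map_smul] using this
  have key : φ (Φ (qasGen k p r)) * φ (Φ (qasGen k p s)) =
      p r s • (φ (Φ (qasGen k p s)) * φ (Φ (qasGen k p r))) := by
    rw [← map_mul, ← map_mul, ← map_mul, ← map_mul, hrelp, map_smul, map_smul]
  rw [hα, hβ, hsum, hsum] at key
  have key2 : (α d * β d) • (Polynomial.X * Polynomial.X : Polynomial k) =
      (p r s * (β d * α d)) • (Polynomial.X * Polynomial.X : Polynomial k) := by
    calc (α d * β d) • (Polynomial.X * Polynomial.X : Polynomial k)
        = (α d • Polynomial.X) * (β d • Polynomial.X) := by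
          rw [smul_mul_smul_comm]
      _ = p r s • ((β d • Polynomial.X) * (α d • Polynomial.X)) := key
      _ = (p r s * (β d * α d)) • (Polynomial.X * Polynomial.X) := by
          rw [smul_mul_smul_comm, smul_smul]
  have hX2 : (Polynomial.X * Polynomial.X : Polynomial k) ≠ 0 := by
    simp [Polynomial.X_ne_zero]
  have heq : α d * β d = p r s * (β d * α d) := by
    by_contra h
    exact (sub_ne_zero.2 h) (by
      have := sub_eq_zero.2 key2
      rw [← sub_smul] at this
      exact (smul_eq_zero.1 this).resolve_right hX2)
  have : α d * β d = 0 := by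
    by_contra h
    exact hrs (mul_right_cancel₀ h (by linear_combination heq)).symm
  exact mul_eq_zero.1 this
end

section
/- Suppose Φ: O_p(k^n) → O_q(k^n) is a graded isomorphism, τ ∈ S_n a permutation such that for each i, y_{τ(i)} appears with nonzero coefficient in Φ(x_i). If p_{rs} ≠ 1 for some r,s, then p_{rs} = q_{τ(r)τ(s)}. -/
open scoped BigOperators

section Aux
variable {k : Type*} [Field k]

/-- Shift in first coordinate, twisted by `c ^ (second coordinate)`. -/
noncomputable def Uop (c : k) : Module.End k ((ℕ × ℕ) →₀ k) :=
  Finsupp.lsum k fun mn => c ^ mn.2 • Finsupp.lsingle (mn.1 + 1, mn.2)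

/-- Shift in second coordinate. -/
noncomputable def Vop (k : Type*) [Field k] : Module.End k ((ℕ × ℕ) →₀ k) :=
  Finsupp.lsum k fun mn => Finsupp.lsingle (mn.1, mn.2 + 1)

@[simp] lemma Uop_single (c : k) (mn : ℕ × ℕ) (x : k) :
    Uop c (Finsupp.single mn x) = c ^ mn.2 • Finsupp.single (mn.1 + 1, mn.2) x := by
  simp [Uop]

@[simp] lemma Vop_single (mn : ℕ × ℕ) (x : k) :
    Vop k (Finsupp.single mn x) = Finsupp.single (mn.1, mn.2 + 1) x := by
  simp [Vop]

lemma UV_comm (c : k) : Uop c * Vop k = c • (Vop k * Uop c) := by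
  apply Finsupp.lhom_ext
  intro mn x
  obtain ⟨m, nn⟩ := mn
  rw [Module.End.mul_apply, Vop_single, Uop_single, LinearMap.smul_apply,
    Module.End.mul_apply, Uop_single, map_smul, Vop_single, smul_smul]
  simp [pow_succ, mul_comm]

end Aux

/-- If `Φ` is a graded isomorphism with coefficient matrix `γ`, `τ` a permutation
with `γ i (τ i) ≠ 0` for each `i` (i.e. `y (τ i)` is a summand of `Φ (x i)`),
and `p r s ≠ 1`, then `p r s = q (τ r) (τ s)`. -/
theorem qas_graded_iso_param_eq {k : Type*} [Field k] {n : ℕ}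
    (p q : Matrix (Fin n) (Fin n) k) (hp : MultAntisym p) (hq : MultAntisym q)
    (Φ : QAS k p ≃ₐ[k] QAS k q) (γ : Fin n → Fin n → k)
    (hΦ : ∀ i, Φ (qasGen k p i) = ∑ j, γ i j • qasGen k q j)
    (τ : Equiv.Perm (Fin n)) (hτ : ∀ i, γ i (τ i) ≠ 0)
    (r s : Fin n) (hrs : p r s ≠ 1) :
    p r s = q (τ r) (τ s) := by
  have hrsne : r ≠ s := by rintro rfl; exact hrs (hp.1 r)
  have hab : τ r ≠ τ s := fun h => hrsne (τ.injective h)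
  set c : k := q (τ r) (τ s) with hc
  -- the representation
  set f : Fin n → Module.End k ((ℕ × ℕ) →₀ k) :=
    fun i => if i = τ r then Uop c else if i = τ s then Vop k else 0 with hf
  have hfa : f (τ r) = Uop c := by simp [hf]
  have hfb : f (τ s) = Vop k := by simp [hf, hab.symm]
  have hrel : ∀ i j, f i * f j = q i j • (f j * f i) := by
    intro i j
    rcases eq_or_ne i (τ r) with hi | hi
    · rcases eq_or_ne j (τ r) with hj | hj
      · subst hi; subst hj; rw [hq.1, one_smul]
      · rcases eq_or_ne j (τ s) with hj' | hj'
        · subst hi; subst hj'; rw [hfa, hfb]; exact UV_comm c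
        · subst hi; rw [hf]; simp [hj, hj', smul_zero]
    · rcases eq_or_ne i (τ s) with hi' | hi'
      · rcases eq_or_ne j (τ r) with hj | hj
        · subst hi'; subst hj
          rw [hfa, hfb, UV_comm c]
          rw [smul_smul]
          have : q (τ s) (τ r) * c = 1 := hq.2 _ _
          rw [this, one_smul]
        · rcases eq_or_ne j (τ s) with hj' | hj'
          · subst hi'; subst hj'; rw [hq.1, one_smul]
          · subst hi'; rw [hf]; simp [hj, hj', smul_zero]
      · rw [hf]; simp [hi, hi', smul_zero]
  -- lift to an algebra hom on QAS k q
  have hlift : ∀ ⦃x y : FreeAlgebra k (Fin n)⦄, QASRel k q x y →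
      FreeAlgebra.lift k f x = FreeAlgebra.lift k f y := by
    rintro _ _ ⟨i, j⟩
    simp only [map_mul, map_smul, FreeAlgebra.lift_ι_apply]
    exact hrel i j
  set Ψ : QAS k q →ₐ[k] Module.End k ((ℕ × ℕ) →₀ k) :=
    RingQuot.liftAlgHom k ⟨FreeAlgebra.lift k f, hlift⟩ with hΨ
  have hΨgen : ∀ j, Ψ (qasGen k q j) = f j := by
    intro j
    rw [hΨ, qasGen, RingQuot.liftAlgHom_mkAlgHom_apply, FreeAlgebra.lift_ι_apply]
  -- the basic relation in QAS k p
  have base : qasGen k p r * qasGen k p s = p r s • (qasGen k p s * qasGen k p r) := by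
    have h := RingQuot.mkAlgHom_rel k (QASRel.rel (p := p) r s)
    simpa only [map_mul, map_smul, qasGen] using h
  have key : (∑ j, γ r j • f j) * (∑ j, γ s j • f j)
      = p r s • ((∑ j, γ s j • f j) * (∑ j, γ r j • f j)) := by
    have h := congrArg Φ base
    rw [map_mul, map_smul, map_mul, hΦ, hΦ] at h
    have h2 := congrArg Ψ h
    rw [map_mul, map_smul, map_mul, map_sum, map_sum] at h2
    simpa only [map_smul, hΨgen] using h2
  -- collapse the sums
  have hsum : ∀ i, (∑ j, γ i j • f j) = γ i (τ r) • Uop c + γ i (τ s) • Vop k := by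
    intro i
    rw [← Finset.sum_subset (Finset.subset_univ ({τ r, τ s} : Finset (Fin n)))]
    · rw [Finset.sum_pair hab, hfa, hfb]
    · intro j _ hj
      simp only [Finset.mem_insert, Finset.mem_singleton, not_or] at hj
      rw [hf]; simp [hj.1, hj.2]
  rw [hsum, hsum] at key
  -- evaluate on single (0,0) 1
  set α := γ r (τ r) with hα
  set β := γ r (τ s) with hβ
  set α' := γ s (τ r) with hα'
  set β' := γ s (τ s) with hβ'
  have E := LinearMap.congr_fun key (Finsupp.single ((0 : ℕ), (0 : ℕ)) (1 : k))
  simp only [add_mul, mul_add, LinearMap.add_apply, Module.End.mul_apply,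
    LinearMap.smul_apply, Uop_single, Vop_single, map_smul, smul_smul,
    Finsupp.smul_single, pow_zero, pow_one, one_mul, mul_one, smul_eq_mul] at E
  -- coefficient at (2,0): α * α' = p r s * (α' * α)
  have h20 := DFunLike.congr_fun E ((2 : ℕ), (0 : ℕ))
  have h11 := DFunLike.congr_fun E ((1 : ℕ), (1 : ℕ))
  simp [Finsupp.single_apply, Finsupp.add_apply, Prod.ext_iff] at h20 h11
  -- from h20 : α * α' = p r s * (α' * α), deduce α' = 0
  have h1 : (1 - p r s) * (α * α') = 0 := by linear_combination h20
  rcases mul_eq_zero.1 h1 with h | h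
  · exact absurd (sub_eq_zero.mp h).symm hrs
  · rcases mul_eq_zero.1 h with h' | h'
    · exact absurd h' (hτ r)
    · rw [h'] at h11
      have hαβ' : α * β' ≠ 0 := mul_ne_zero (hτ r) (hτ s)
      exact mul_right_cancel₀ hαβ' (by linear_combination -h11)
end

section
/- If Φ: O_p(k^n) → O_q(k^n) is a graded isomorphism of quantum affine spaces and τ ∈ S_n satisfies p_{rs} = q_{τ(r)τ(s)} whenever p_{rs} ≠ 1, and likewise the inverse isomorphism gives q_{rs} = p_{τ'(r)τ'(s)} whenever q_{rs} ≠ 1, then the multisets {p_{ij} : p_{ij} ≠ 1} and {q_{ij} : q_{ij} ≠ 1} are equal; consequently p_{rs} = 1 implies q_{τ(r)τ(s)} = 1. -/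
open scoped BigOperators

/-- Given a graded isomorphism `Φ : O_p(k^n) → O_q(k^n)` and permutations `τ, τ'`
matching the non-identity parameters of `p` with those of `q` and vice versa,
the multisets of non-identity parameters agree, and consequently `p r s = 1`
implies `q (τ r) (τ s) = 1`. -/
theorem qas_param_multiset_eq {k : Type*} [Field k] [DecidableEq k] {n : ℕ}
    (p q : Matrix (Fin n) (Fin n) k) (hp : MultAntisym p) (hq : MultAntisym q)
    (Φ : QAS k p ≃ₐ[k] QAS k q) (τ τ' : Equiv.Perm (Fin n))
    (hτ : ∀ r s, p r s ≠ 1 → p r s = q (τ r) (τ s))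
    (hτ' : ∀ r s, q r s ≠ 1 → q r s = p (τ' r) (τ' s)) :
    (Multiset.filter (· ≠ 1)
        ((Finset.univ : Finset (Fin n × Fin n)).val.map fun ij => p ij.1 ij.2)) =
      (Multiset.filter (· ≠ 1)
        ((Finset.univ : Finset (Fin n × Fin n)).val.map fun ij => q ij.1 ij.2)) ∧
    ∀ r s, p r s = 1 → q (τ r) (τ s) = 1 := by
  classical
  set e : Fin n × Fin n ≃ Fin n × Fin n := Equiv.prodCongr τ τ with he
  set e' : Fin n × Fin n ≃ Fin n × Fin n := Equiv.prodCongr τ' τ' with he'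
  set Sp : Finset (Fin n × Fin n) := Finset.univ.filter (fun ij => p ij.1 ij.2 ≠ 1) with hSp
  set Sq : Finset (Fin n × Fin n) := Finset.univ.filter (fun ij => q ij.1 ij.2 ≠ 1) with hSq
  have hsub : Sp.map e.toEmbedding ⊆ Sq := by
    intro ij hij
    simp only [Finset.mem_map, hSp, Finset.mem_filter, Finset.mem_univ, true_and] at hij
    obtain ⟨ab, hab, rfl⟩ := hij
    simp only [hSq, Finset.mem_filter, Finset.mem_univ, true_and, he, Equiv.prodCongr_apply]
    exact fun h => hab ((hτ ab.1 ab.2 hab).trans h)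
  have hsub' : Sq.map e'.toEmbedding ⊆ Sp := by
    intro ij hij
    simp only [Finset.mem_map, hSq, Finset.mem_filter, Finset.mem_univ, true_and] at hij
    obtain ⟨ab, hab, rfl⟩ := hij
    simp only [hSp, Finset.mem_filter, Finset.mem_univ, true_and, he', Equiv.prodCongr_apply]
    exact fun h => hab ((hτ' ab.1 ab.2 hab).trans h)
  have hcard : Sp.card = Sq.card :=
    le_antisymm
      ((Finset.card_map _ ▸ Finset.card_le_card hsub))
      ((Finset.card_map _ ▸ Finset.card_le_card hsub'))
  have heq : Sp.map e.toEmbedding = Sq :=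
    Finset.eq_of_subset_of_card_le hsub (by rw [Finset.card_map]; exact hcard.ge)
  constructor
  · have h1 : (Multiset.filter (· ≠ 1)
        ((Finset.univ : Finset (Fin n × Fin n)).val.map fun ij => p ij.1 ij.2)) =
        Sp.val.map (fun ij => p ij.1 ij.2) := by
      rw [Multiset.filter_map]; rfl
    have h2 : (Multiset.filter (· ≠ 1)
        ((Finset.univ : Finset (Fin n × Fin n)).val.map fun ij => q ij.1 ij.2)) =
        Sq.val.map (fun ij => q ij.1 ij.2) := by
      rw [Multiset.filter_map]; rfl
    rw [h1, h2, ← heq, Finset.map_val, Multiset.map_map]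
    refine Multiset.map_congr rfl ?_
    intro ab hab
    rw [hSp, Finset.filter_val, Multiset.mem_filter] at hab
    exact hτ ab.1 ab.2 hab.2
  · intro r s hrs
    by_contra hq1
    have : (τ r, τ s) ∈ Sq := by
      simp [hSq, hq1]
    rw [← heq, Finset.mem_map] at this
    obtain ⟨ab, hab, habe⟩ := this
    have : ab = (r, s) := e.injective (by simpa [he] using habe)
    subst this
    simp only [hSp, Finset.mem_filter] at hab
    exact hab.2 hrs
end

section
/- Every degree-one normal element of the homogenized quantized Weyl algebra H_n^{p,γ} is a scalar multiple of z. That is, if u = a z + Σ_i (α_i x_i + β_i y_i) is normal in H_n^{p,γ}, then all α_i = β_i = 0. -/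
open scoped BigOperators

/-- Generators of the homogenized quantized Weyl algebra: `z`, `x i`, `y i`. -/
inductive HWGen (n : ℕ) where
  | z : HWGen n
  | x : Fin n → HWGen n
  | y : Fin n → HWGen n

/-- Defining relations of the homogenized multiparameter quantized Weyl algebra
`H_n^{p,γ}`. -/
inductive HWRel (k : Type*) [Field k] {n : ℕ} (p : Matrix (Fin n) (Fin n) k)
    (γ : Fin n → k) : FreeAlgebra k (HWGen n) → FreeAlgebra k (HWGen n) → Prop
  | zx (i : Fin n) : HWRel k p γ (FreeAlgebra.ι k HWGen.z * FreeAlgebra.ι k (HWGen.x i))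
      (FreeAlgebra.ι k (HWGen.x i) * FreeAlgebra.ι k HWGen.z)
  | zy (i : Fin n) : HWRel k p γ (FreeAlgebra.ι k HWGen.z * FreeAlgebra.ι k (HWGen.y i))
      (FreeAlgebra.ι k (HWGen.y i) * FreeAlgebra.ι k HWGen.z)
  | yy (i j : Fin n) : HWRel k p γ
      (FreeAlgebra.ι k (HWGen.y i) * FreeAlgebra.ι k (HWGen.y j))
      (p i j • (FreeAlgebra.ι k (HWGen.y j) * FreeAlgebra.ι k (HWGen.y i)))
  | xx (i j : Fin n) (h : i < j) : HWRel k p γ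
      (FreeAlgebra.ι k (HWGen.x i) * FreeAlgebra.ι k (HWGen.x j))
      ((γ i * p i j) • (FreeAlgebra.ι k (HWGen.x j) * FreeAlgebra.ι k (HWGen.x i)))
  | xy_lt (i j : Fin n) (h : i < j) : HWRel k p γ
      (FreeAlgebra.ι k (HWGen.x i) * FreeAlgebra.ι k (HWGen.y j))
      (p j i • (FreeAlgebra.ι k (HWGen.y j) * FreeAlgebra.ι k (HWGen.x i)))
  | xy_gt (i j : Fin n) (h : j < i) : HWRel k p γ
      (FreeAlgebra.ι k (HWGen.x i) * FreeAlgebra.ι k (HWGen.y j))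
      ((γ j * p j i) • (FreeAlgebra.ι k (HWGen.y j) * FreeAlgebra.ι k (HWGen.x i)))
  | xy_eq (j : Fin n) : HWRel k p γ
      (FreeAlgebra.ι k (HWGen.x j) * FreeAlgebra.ι k (HWGen.y j))
      (FreeAlgebra.ι k HWGen.z * FreeAlgebra.ι k HWGen.z +
        γ j • (FreeAlgebra.ι k (HWGen.y j) * FreeAlgebra.ι k (HWGen.x j)) +
        ∑ l ∈ Finset.Iio j,
          (γ l - 1) • (FreeAlgebra.ι k (HWGen.y l) * FreeAlgebra.ι k (HWGen.x l)))

/-- The homogenized multiparameter quantized Weyl algebra `H_n^{p,γ}`. -/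
abbrev HWAlg (k : Type*) [Field k] {n : ℕ} (p : Matrix (Fin n) (Fin n) k)
    (γ : Fin n → k) := RingQuot (HWRel k p γ)

/-- The homogenizing generator `z` of `H_n^{p,γ}`. -/
noncomputable def hwZ (k : Type*) [Field k] {n : ℕ} (p : Matrix (Fin n) (Fin n) k)
    (γ : Fin n → k) : HWAlg k p γ :=
  RingQuot.mkAlgHom k (HWRel k p γ) (FreeAlgebra.ι k HWGen.z)

/-- The generator `x i` of `H_n^{p,γ}`. -/
noncomputable def hwX (k : Type*) [Field k] {n : ℕ} (p : Matrix (Fin n) (Fin n) k)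
    (γ : Fin n → k) (i : Fin n) : HWAlg k p γ :=
  RingQuot.mkAlgHom k (HWRel k p γ) (FreeAlgebra.ι k (HWGen.x i))

/-- The generator `y i` of `H_n^{p,γ}`. -/
noncomputable def hwY (k : Type*) [Field k] {n : ℕ} (p : Matrix (Fin n) (Fin n) k)
    (γ : Fin n → k) (i : Fin n) : HWAlg k p γ :=
  RingQuot.mkAlgHom k (HWRel k p γ) (FreeAlgebra.ι k (HWGen.y i))
namespace HWP

variable {k : Type*} [Field k] {n : ℕ}

abbrev Idx (n : ℕ) := (Fin n → ℕ) × ℕ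
abbrev Vn (k : Type*) [Field k] (n : ℕ) := Idx n →₀ k

def δf (l : Fin n) : Fin n → ℕ := fun r => if r = l then 1 else 0

lemma add_sub_δf (m : Fin n → ℕ) (l : Fin n) : (m + δf l) - δf l = m := by
  funext r; simp only [Pi.sub_apply, Pi.add_apply, δf]; split_ifs <;> omega

lemma sub_add_δf (m : Fin n → ℕ) (l : Fin n) (h : 1 ≤ m l) : (m - δf l) + δf l = m := by
  funext r; simp only [Pi.add_apply, Pi.sub_apply, δf]
  split_ifs with hr
  · subst hr; omega
  · omega

lemma sub_δf_apply_same (m : Fin n → ℕ) (l : Fin n) : (m - δf l) l = m l - 1 := by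
  simp [δf, Pi.sub_apply]
lemma sub_δf_apply_ne (m : Fin n → ℕ) {l r : Fin n} (h : r ≠ l) : (m - δf l) r = m r := by
  simp [δf, Pi.sub_apply, h]
lemma add_δf_apply_same (m : Fin n → ℕ) (l : Fin n) : (m + δf l) l = m l + 1 := by
  simp [δf, Pi.add_apply]
lemma add_δf_apply_ne (m : Fin n → ℕ) {l r : Fin n} (h : r ≠ l) : (m + δf l) r = m r := by
  simp [δf, Pi.add_apply, h]

lemma sub_δf_comm (m : Fin n → ℕ) (i j : Fin n) : (m - δf j) - δf i = (m - δf i) - δf j := by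
  funext r; simp only [Pi.sub_apply]; omega

lemma add_sub_δf_comm (m : Fin n → ℕ) {i j : Fin n} (h : 1 ≤ m i) :
    (m + δf j) - δf i = (m - δf i) + δf j := by
  funext r
  rcases eq_or_ne r i with rfl | hri
  · simp only [Pi.sub_apply, Pi.add_apply, δf, if_pos rfl]
    split_ifs <;> omega
  · simp only [Pi.sub_apply, Pi.add_apply, δf, if_neg hri]
    split_ifs <;> omega

lemma cancel_add_δf {m q : Fin n → ℕ} {l : Fin n} (h : m + δf l = q) : m = q - δf l := by
  funext r; have := congrFun h r; simp only [Pi.add_apply, Pi.sub_apply] at this ⊢; omega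

lemma prod_pow_add (F : Fin n → k) (m : Fin n → ℕ) (i : Fin n) :
    ∏ l, F l ^ (m + δf i) l = F i * ∏ l, F l ^ m l := by
  have h : ∀ l, F l ^ (m + δf i) l = F l ^ m l * (if l = i then F l else 1) := by
    intro l
    by_cases hl : l = i
    · subst hl; rw [add_δf_apply_same, pow_succ, if_pos rfl]
    · rw [add_δf_apply_ne _ hl, if_neg hl, mul_one]
  rw [Finset.prod_congr rfl (fun l _ => h l), Finset.prod_mul_distrib,
    Finset.prod_ite_eq' Finset.univ i F, if_pos (Finset.mem_univ i), mul_comm]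

lemma prod_pow_sub (F : Fin n → k) (m : Fin n → ℕ) (i : Fin n) (h : 1 ≤ m i) :
    ∏ l, F l ^ m l = F i * ∏ l, F l ^ (m - δf i) l := by
  conv_lhs => rw [← sub_add_δf m i h]
  rw [prod_pow_add]

lemma prod_pow_δf (F : Fin n → k) (i : Fin n) : ∏ l, F l ^ (δf i) l = F i := by
  have : δf i = (0 : Fin n → ℕ) + δf i := by simp
  rw [this, prod_pow_add]; simp

/-! ### generic operators -/

noncomputable def Top (f : Idx n → k) (σ : Idx n → Idx n) : Vn k n →ₗ[k] Vn k n :=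
  Finsupp.lsum k fun a => f a • Finsupp.lsingle (σ a)

lemma Top_single (f : Idx n → k) (σ : Idx n → Idx n) (a : Idx n) (c : k) :
    Top f σ (Finsupp.single a c) = Finsupp.single (σ a) (f a * c) := by
  rw [Top, Finsupp.lsum_single, LinearMap.smul_apply, Finsupp.lsingle_apply,
    Finsupp.smul_single']

lemma Top_apply_eq (f : Idx n → k) (σ : Idx n → Idx n) (pt a₀ : Idx n)
    (h₀ : σ a₀ = pt) (huniq : ∀ b, σ b = pt → b ≠ a₀ → f b = 0) (w : Vn k n) :
    (Top f σ w) pt = f a₀ * w a₀ := by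
  classical
  rw [Top, Finsupp.lsum_apply, Finsupp.sum_apply, Finsupp.sum]
  have h1 : ∀ b ∈ w.support, ((f b • Finsupp.lsingle (R := k) (σ b)) (w b)) pt
      = if b = a₀ then f a₀ * w b else 0 := by
    intro b _
    rw [LinearMap.smul_apply, Finsupp.lsingle_apply, Finsupp.smul_single',
      Finsupp.single_apply]
    by_cases hb : b = a₀
    · subst hb; simp [h₀]
    · simp only [hb, if_false]
      by_cases hσ : σ b = pt
      · rw [huniq b hσ hb, zero_mul, if_pos hσ]
      · rw [if_neg hσ]
  rw [Finset.sum_congr rfl h1, Finset.sum_ite_eq' w.support a₀ (fun b => f a₀ * w b)]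
  by_cases ha : a₀ ∈ w.support
  · rw [if_pos ha]
  · rw [if_neg ha, Finsupp.notMem_support_iff.mp ha, mul_zero]

lemma Top_apply_zero (f : Idx n → k) (σ : Idx n → Idx n) (pt : Idx n)
    (h : ∀ b, σ b = pt → f b = 0) (w : Vn k n) :
    (Top f σ w) pt = 0 := by
  classical
  rw [Top, Finsupp.lsum_apply, Finsupp.sum_apply, Finsupp.sum]
  apply Finset.sum_eq_zero
  intro b _
  rw [LinearMap.smul_apply, Finsupp.lsingle_apply, Finsupp.smul_single',
    Finsupp.single_apply]
  by_cases hσ : σ b = pt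
  · rw [h b hσ, zero_mul, if_pos hσ]
  · rw [if_neg hσ]

noncomputable def Zop : Vn k n →ₗ[k] Vn k n :=
  Top (fun _ => 1) (fun a => (a.1, a.2 + 1))

noncomputable def Rop (cc : (Fin n → ℕ) → k) (l : Fin n) : Vn k n →ₗ[k] Vn k n :=
  Top (fun a => cc a.1) (fun a => (a.1 + δf l, a.2))

noncomputable def Lop (dd : (Fin n → ℕ) → k) (l : Fin n) : Vn k n →ₗ[k] Vn k n :=
  Top (fun a => dd a.1) (fun a => (a.1 - δf l, a.2 + 2))

lemma Zop_single (a : Idx n) (c : k) :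
    Zop (Finsupp.single a c) = Finsupp.single (a.1, a.2 + 1) c := by
  rw [Zop, Top_single, one_mul]
lemma Rop_single (cc : (Fin n → ℕ) → k) (l : Fin n) (a : Idx n) (c : k) :
    Rop cc l (Finsupp.single a c) = Finsupp.single (a.1 + δf l, a.2) (cc a.1 * c) := by
  rw [Rop, Top_single]
lemma Lop_single (dd : (Fin n → ℕ) → k) (l : Fin n) (a : Idx n) (c : k) :
    Lop dd l (Finsupp.single a c) = Finsupp.single (a.1 - δf l, a.2 + 2) (dd a.1 * c) := by
  rw [Lop, Top_single]

/-! ### evaluation lemmas -/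

lemma Zop_apply_succ (w : Vn k n) (q : Fin n → ℕ) (E : ℕ) :
    (Zop w) (q, E + 1) = w (q, E) := by
  rw [Zop, Top_apply_eq _ _ _ (q, E) rfl, one_mul]
  rintro ⟨b1, b2⟩ hb hne
  exfalso; apply hne
  obtain ⟨h1, h2⟩ := Prod.mk.injEq .. ▸ hb
  exact Prod.ext h1 (by omega)

lemma Zop_apply_zero (w : Vn k n) (q : Fin n → ℕ) :
    (Zop w) (q, 0) = 0 := by
  rw [Zop, Top_apply_zero]
  rintro ⟨b1, b2⟩ hb
  exfalso
  obtain ⟨h1, h2⟩ := Prod.mk.injEq .. ▸ hb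
  omega

lemma Rop_apply_pos (cc : (Fin n → ℕ) → k) (l : Fin n) (w : Vn k n)
    (q : Fin n → ℕ) (E : ℕ) (h : 1 ≤ q l) :
    (Rop cc l w) (q, E) = cc (q - δf l) * w (q - δf l, E) := by
  rw [Rop, Top_apply_eq _ _ _ (q - δf l, E)]
  · simp only [Prod.mk.injEq]
    exact ⟨sub_add_δf q l h, trivial⟩
  · rintro ⟨b1, b2⟩ hb hne
    exfalso; apply hne
    obtain ⟨h1, h2⟩ := Prod.mk.injEq .. ▸ hb
    exact Prod.ext (cancel_add_δf h1) h2

lemma Rop_apply_zero (cc : (Fin n → ℕ) → k) (l : Fin n) (w : Vn k n)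
    (q : Fin n → ℕ) (E : ℕ) (h : q l = 0) :
    (Rop cc l w) (q, E) = 0 := by
  rw [Rop, Top_apply_zero]
  rintro ⟨b1, b2⟩ hb
  exfalso
  obtain ⟨h1, _⟩ := Prod.mk.injEq .. ▸ hb
  have := congrFun h1 l
  rw [add_δf_apply_same] at this
  omega

lemma Lop_apply_two (dd : (Fin n → ℕ) → k) (l : Fin n)
    (hdd : ∀ m, m l = 0 → dd m = 0) (w : Vn k n) (q : Fin n → ℕ) (E : ℕ) :
    (Lop dd l w) (q, E + 2) = dd (q + δf l) * w (q + δf l, E) := by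
  rw [Lop, Top_apply_eq _ _ _ (q + δf l, E)]
  · simp only [Prod.mk.injEq]
    exact ⟨add_sub_δf q l, trivial⟩
  · rintro ⟨b1, b2⟩ hb hne
    obtain ⟨h1, h2⟩ := Prod.mk.injEq .. ▸ hb
    by_cases hz : b1 l = 0
    · exact hdd b1 hz
    · exfalso; apply hne
      have hb1 : b1 = q + δf l := by
        have := sub_add_δf b1 l (by omega)
        rw [h1] at this
        exact this.symm
      exact Prod.ext hb1 (by omega)

lemma Lop_apply_zero (dd : (Fin n → ℕ) → k) (l : Fin n) (w : Vn k n) (q : Fin n → ℕ) :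
    (Lop dd l w) (q, 0) = 0 := by
  rw [Lop, Top_apply_zero]
  rintro ⟨b1, b2⟩ hb
  exfalso; obtain ⟨_, h2⟩ := Prod.mk.injEq .. ▸ hb; omega

lemma Lop_apply_one (dd : (Fin n → ℕ) → k) (l : Fin n) (w : Vn k n) (q : Fin n → ℕ) :
    (Lop dd l w) (q, 1) = 0 := by
  rw [Lop, Top_apply_zero]
  rintro ⟨b1, b2⟩ hb
  exfalso; obtain ⟨_, h2⟩ := Prod.mk.injEq .. ▸ hb; omega

end HWP
namespace HWP
variable {k : Type*} [Field k] {n : ℕ}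

section Coeffs
variable (p : Matrix (Fin n) (Fin n) k) (γ : Fin n → k)

def Cc (i l : Fin n) : k := if i < l then p i l else 1
def cY (i : Fin n) (m : Fin n → ℕ) : k := ∏ l, Cc p i l ^ m l
def Ee (i l : Fin n) : k := if l < i then γ l else if i < l then p l i else 1
def geomS (x : k) (t : ℕ) : k := ∑ s ∈ Finset.range t, x ^ s
def dX (i : Fin n) (m : Fin n → ℕ) : k := (∏ l, Ee p γ i l ^ m l) * geomS (γ i) (m i)
def Cc' (i l : Fin n) : k := if l < i then (γ l * p l i)⁻¹ else 1
def cX' (i : Fin n) (m : Fin n → ℕ) : k := ∏ l, Cc' p γ i l ^ m l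
def Ep' (i l : Fin n) : k := if l < i then p l i else 1
def κf (i : Fin n) : k := ∏ l, (if l < i then (γ l)⁻¹ else 1)
def dY' (i : Fin n) (m : Fin n → ℕ) : k :=
  -((∏ l, Ep' p i l ^ m l) * (κf γ i * (γ i)⁻¹ * geomS ((γ i)⁻¹) (m i)))

def QQ (m : Fin n → ℕ) (t : ℕ) : k := ∏ r : Fin n, (if (r : ℕ) < t then γ r ^ m r else 1)
def RR (m : Fin n → ℕ) (t : ℕ) : k :=
  ∏ r : Fin n, (if (r : ℕ) < t then ((γ r)⁻¹) ^ (m r + 1) else 1)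

end Coeffs

section Facts
variable {p : Matrix (Fin n) (Fin n) k} {γ : Fin n → k}

lemma geomS_zero (x : k) : geomS x 0 = 0 := by simp [geomS]
lemma geomS_one (x : k) : geomS x 1 = 1 := by simp [geomS]
lemma geomS_succ (x : k) (t : ℕ) : geomS x (t + 1) = 1 + x * geomS x t := by
  rw [geomS, Finset.sum_range_succ', geomS, Finset.mul_sum]
  simp only [pow_succ, pow_zero]
  rw [add_comm]
  congr 1
  exact Finset.sum_congr rfl fun s _ => (mul_comm _ _)

lemma geomS_mul_sub_one (x : k) (t : ℕ) : (x - 1) * geomS x t = x ^ t - 1 := by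
  rw [mul_comm, geomS, geom_sum_mul]

lemma dX_zero {m : Fin n → ℕ} {i : Fin n} (h : m i = 0) : dX p γ i m = 0 := by
  rw [dX, h, geomS_zero, mul_zero]
lemma dY'_zero {m : Fin n → ℕ} {i : Fin n} (h : m i = 0) : dY' p γ i m = 0 := by
  rw [dY', h, geomS_zero]; ring

lemma cY_zero (i : Fin n) : cY p i 0 = 1 := by simp [cY]
lemma cX'_zero (i : Fin n) : cX' p γ i 0 = 1 := by simp [cX']
lemma Cc_self (i : Fin n) : Cc p i i = 1 := by simp [Cc]
lemma Cc'_self (i : Fin n) : Cc' p γ i i = 1 := by simp [Cc']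
lemma Ee_self (i : Fin n) : Ee p γ i i = 1 := by simp [Ee]
lemma Ep'_self (i : Fin n) : Ep' p i i = 1 := by simp [Ep']

lemma cY_δf (i l : Fin n) : cY p i (δf l) = Cc p i l := prod_pow_δf _ _
lemma cX'_δf (i l : Fin n) : cX' p γ i (δf l) = Cc' p γ i l := prod_pow_δf _ _

lemma dX_δf_self (i : Fin n) : dX p γ i (δf i) = 1 := by
  rw [dX, prod_pow_δf, Ee_self, δf, if_pos rfl, geomS_one, one_mul]

lemma dY'_δf_self (i : Fin n) : dY' p γ i (δf i) = -(κf γ i * (γ i)⁻¹) := by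
  rw [dY', prod_pow_δf, Ep'_self, δf, if_pos rfl, geomS_one, one_mul, mul_one]

/-- bump lemmas -/
lemma cY_add (i j : Fin n) (m : Fin n → ℕ) :
    cY p i (m + δf j) = Cc p i j * cY p i m := prod_pow_add _ _ _
lemma cY_sub (i j : Fin n) (m : Fin n → ℕ) (h : 1 ≤ m j) :
    cY p i m = Cc p i j * cY p i (m - δf j) := prod_pow_sub _ _ _ h
lemma cX'_add (i j : Fin n) (m : Fin n → ℕ) :
    cX' p γ i (m + δf j) = Cc' p γ i j * cX' p γ i m := prod_pow_add _ _ _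
lemma cX'_sub (i j : Fin n) (m : Fin n → ℕ) (h : 1 ≤ m j) :
    cX' p γ i m = Cc' p γ i j * cX' p γ i (m - δf j) := prod_pow_sub _ _ _ h

lemma dX_add (i : Fin n) {j : Fin n} (m : Fin n → ℕ) (hij : j ≠ i) :
    dX p γ i (m + δf j) = Ee p γ i j * dX p γ i m := by
  rw [dX, dX, prod_pow_add, add_δf_apply_ne m (Ne.symm hij)]
  ring
lemma dX_sub (i : Fin n) {j : Fin n} (m : Fin n → ℕ) (hij : j ≠ i) (h : 1 ≤ m j) :
    dX p γ i m = Ee p γ i j * dX p γ i (m - δf j) := by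
  conv_lhs => rw [← sub_add_δf m j h]
  rw [dX_add _ _ hij]

lemma dY'_add (i : Fin n) {j : Fin n} (m : Fin n → ℕ) (hij : j ≠ i) :
    dY' p γ i (m + δf j) = Ep' p i j * dY' p γ i m := by
  rw [dY', dY', prod_pow_add, add_δf_apply_ne m (id (Ne.symm hij))]
  ring
lemma dY'_sub (i : Fin n) {j : Fin n} (m : Fin n → ℕ) (hij : j ≠ i) (h : 1 ≤ m j) :
    dY' p γ i m = Ep' p i j * dY' p γ i (m - δf j) := by
  conv_lhs => rw [← sub_add_δf m j h]
  rw [dY'_add _ _ hij]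

lemma cY_sub_self (i : Fin n) (m : Fin n → ℕ) : cY p i (m - δf i) = cY p i m := by
  by_cases h : 1 ≤ m i
  · rw [cY_sub i i m h, Cc_self, one_mul]
  · have : m - δf i = m := by
      funext r; simp only [Pi.sub_apply, δf]; split_ifs with hr
      · subst hr; omega
      · omega
    rw [this]

lemma cX'_sub_self (i : Fin n) (m : Fin n → ℕ) : cX' p γ i (m - δf i) = cX' p γ i m := by
  by_cases h : 1 ≤ m i
  · rw [cX'_sub i i m h, Cc'_self, one_mul]
  · have : m - δf i = m := by
      funext r; simp only [Pi.sub_apply, δf]; split_ifs with hr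
      · subst hr; omega
      · omega
    rw [this]

end Facts
end HWP
namespace HWP
variable {k : Type*} [Field k] {n : ℕ}
variable {p : Matrix (Fin n) (Fin n) k} {γ : Fin n → k}

lemma p_ne_zero (hp : MultAntisym p) (i j : Fin n) : p i j ≠ 0 :=
  left_ne_zero_of_mul_eq_one (hp.2 i j)

lemma Cc_ne_zero (hp : MultAntisym p) (i j : Fin n) : Cc p i j ≠ 0 := by
  rw [Cc]; split_ifs
  · exact p_ne_zero hp i j
  · exact one_ne_zero

lemma Cc'_ne_zero (hp : MultAntisym p) (hγ : ∀ i, γ i ≠ 0) (i j : Fin n) :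
    Cc' p γ i j ≠ 0 := by
  rw [Cc']; split_ifs
  · exact inv_ne_zero (mul_ne_zero (hγ _) (p_ne_zero hp _ _))
  · exact one_ne_zero

lemma κf_ne_zero (hγ : ∀ i, γ i ≠ 0) (i : Fin n) : κf γ (k := k) i ≠ 0 := by
  rw [κf]
  apply Finset.prod_ne_zero_iff.mpr
  intro l _
  split_ifs
  · exact inv_ne_zero (hγ _)
  · exact one_ne_zero

/-- scalar identity for `yy` on the first module -/
lemma yyI (hp : MultAntisym p) (i j : Fin n) (m : Fin n → ℕ) :
    cY p j m * cY (n := n) p i (m + δf j) = p i j * (cY p i m * cY p j (m + δf i)) := by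
  rw [cY_add, cY_add]
  have h : Cc p i j = p i j * Cc p j i := by
    rcases lt_trichotomy i j with h | h | h
    · rw [Cc, Cc, if_pos h, if_neg (not_lt_of_gt h), mul_one]
    · subst h; rw [Cc_self, hp.1, mul_one]
    · rw [Cc, Cc, if_neg (not_lt_of_gt h), if_pos h]
      exact (hp.2 i j).symm
  rw [h]; ring

/-- scalar identity for `xx` on the first module, `i < j` -/
lemma xxI (hp : MultAntisym p) (i j : Fin n) (hij : i < j) (m : Fin n → ℕ)
    (hi : 1 ≤ m i) (hj : 1 ≤ m j) :
    dX p γ j m * dX (n := n) p γ i (m - δf j) =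
      (γ i * p i j) * (dX p γ i m * dX p γ j (m - δf i)) := by
  rw [dX_sub j m (ne_of_lt hij) hi, dX_sub i m (Ne.symm (ne_of_lt hij)) hj]
  have h1 : Ee p γ j i = γ i := by rw [Ee, if_pos hij]
  have h2 : Ee p γ i j = p j i := by rw [Ee, if_neg (not_lt_of_gt hij), if_pos hij]
  rw [h1, h2]
  linear_combination (-(γ i * dX p γ i (m - δf j) * dX p γ j (m - δf i))) * (hp.2 i j)

/-- scalar identity for `xy_lt` on the first module, `i < j`, main case -/
lemma xyltI (hp : MultAntisym p) (i j : Fin n) (hij : i < j) (m : Fin n → ℕ)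
    (hi : 1 ≤ m i) :
    cY p j m * dX (n := n) p γ i (m + δf j) = p j i * (dX p γ i m * cY p j (m - δf i)) := by
  rw [dX_add i m (Ne.symm (ne_of_lt hij)), cY_sub j i m hi]
  have h2 : Ee p γ i j = p j i := by rw [Ee, if_neg (not_lt_of_gt hij), if_pos hij]
  have h3 : Cc p j i = 1 := by rw [Cc, if_neg (not_lt_of_gt hij)]
  rw [h2, h3]; ring

/-- scalar identity for `xy_gt` on the first module, `j < i`, main case -/
lemma xygtI (hp : MultAntisym p) (i j : Fin n) (hij : j < i) (m : Fin n → ℕ)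
    (hi : 1 ≤ m i) :
    cY p j m * dX (n := n) p γ i (m + δf j) =
      (γ j * p j i) * (dX p γ i m * cY p j (m - δf i)) := by
  rw [dX_add i m (ne_of_lt hij), cY_sub j i m hi]
  have h2 : Ee p γ i j = γ j := by rw [Ee, if_pos hij]
  have h3 : Cc p j i = p j i := by rw [Cc, if_pos hij]
  rw [h2, h3]; ring

/-- scalar identity for `yy` on the second module (both slots ≥ 1, `i ≠ j`) -/
lemma yy'I (hp : MultAntisym p) (i j : Fin n) (hij : i ≠ j) (m : Fin n → ℕ)
    (hi : 1 ≤ m i) (hj : 1 ≤ m j) :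
    dY' p γ j m * dY' (n := n) p γ i (m - δf j) =
      p i j * (dY' p γ i m * dY' p γ j (m - δf i)) := by
  rw [dY'_sub j m hij hi, dY'_sub i m (Ne.symm hij) hj]
  have h : Ep' p j i = p i j * Ep' p i j := by
    rcases lt_trichotomy i j with h | h | h
    · rw [Ep', Ep', if_pos h, if_neg (not_lt_of_gt h), mul_one]
    · exact absurd h hij
    · rw [Ep', Ep', if_neg (not_lt_of_gt h), if_pos h]
      exact (hp.2 i j).symm
  rw [h]; ring

/-- scalar identity for `xx` on the second module, `i < j` -/
lemma xx'I (hp : MultAntisym p) (hγ : ∀ i, γ i ≠ 0) (i j : Fin n) (hij : i < j)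
    (m : Fin n → ℕ) :
    cX' p γ j m * cX' (n := n) p γ i (m + δf j) =
      (γ i * p i j) * (cX' p γ i m * cX' p γ j (m + δf i)) := by
  rw [cX'_add, cX'_add]
  have h1 : Cc' p γ i j = 1 := by rw [Cc', if_neg (not_lt_of_gt hij)]
  have h2 : Cc' p γ j i = (γ i * p i j)⁻¹ := by rw [Cc', if_pos hij]
  have h3 : (γ i * p i j) * (γ i * p i j)⁻¹ = 1 :=
    mul_inv_cancel₀ (mul_ne_zero (hγ i) (p_ne_zero hp i j))
  rw [h1, h2]
  linear_combination (-(cX' p γ i m * cX' p γ j m)) * h3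

/-- scalar identity for `xy_lt` on the second module, `i < j`, main case -/
lemma xylt'I (hp : MultAntisym p) (i j : Fin n) (hij : i < j) (m : Fin n → ℕ)
    (hj : 1 ≤ m j) :
    dY' p γ j m * cX' (n := n) p γ i (m - δf j) =
      p j i * (cX' p γ i m * dY' p γ j (m + δf i)) := by
  rw [dY'_add j m (ne_of_lt hij), cX'_sub i j m hj]
  have h1 : Cc' p γ i j = 1 := by rw [Cc', if_neg (not_lt_of_gt hij)]
  have h2 : Ep' p j i = p i j := by rw [Ep', if_pos hij]
  rw [h1, h2]
  linear_combination (-(dY' p γ j m * cX' p γ i (m - δf j))) * (hp.2 j i)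

/-- scalar identity for `xy_gt` on the second module, `j < i`, main case -/
lemma xygt'I (hp : MultAntisym p) (hγ : ∀ i, γ i ≠ 0) (i j : Fin n) (hij : j < i)
    (m : Fin n → ℕ) (hj : 1 ≤ m j) :
    dY' p γ j m * cX' (n := n) p γ i (m - δf j) =
      (γ j * p j i) * (cX' p γ i m * dY' p γ j (m + δf i)) := by
  rw [dY'_add j m (Ne.symm (ne_of_lt hij)), cX'_sub i j m hj]
  have h1 : Cc' p γ i j = (γ j * p j i)⁻¹ := by rw [Cc', if_pos hij]
  have h2 : Ep' p j i = 1 := by rw [Ep', if_neg (not_lt_of_gt hij)]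
  have h3 : (γ j * p j i) * (γ j * p j i)⁻¹ = 1 :=
    mul_inv_cancel₀ (mul_ne_zero (hγ j) (p_ne_zero hp j i))
  rw [h1, h2]
  linear_combination (-(dY' p γ j m * cX' p γ i (m - δf j))) * h3

end HWP
namespace HWP
variable {k : Type*} [Field k] {n : ℕ}
variable {p : Matrix (Fin n) (Fin n) k} {γ : Fin n → k}

lemma QQ_zero (m : Fin n → ℕ) : QQ γ m 0 = 1 := by
  rw [QQ]; apply Finset.prod_eq_one; intro r _; simp

lemma RR_zero (m : Fin n → ℕ) : RR γ m 0 = 1 := by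
  rw [RR]; apply Finset.prod_eq_one; intro r _; simp

lemma QQ_succ (m : Fin n → ℕ) (t : ℕ) (ht : t < n) :
    QQ γ m (t + 1) = QQ γ m t * γ ⟨t, ht⟩ ^ m ⟨t, ht⟩ := by
  rw [QQ, QQ]
  have h : ∀ r : Fin n, (if (r : ℕ) < t + 1 then γ r ^ m r else 1)
      = (if (r : ℕ) < t then γ r ^ m r else 1) * (if r = ⟨t, ht⟩ then γ r ^ m r else 1) := by
    intro r
    rcases lt_trichotomy (r : ℕ) t with h | h | h
    · rw [if_pos (by omega), if_pos h, if_neg (by intro he; subst he; simp at h), mul_one]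
    · have : r = ⟨t, ht⟩ := Fin.ext h
      rw [if_pos (by omega), if_neg (by omega), if_pos this, one_mul]
    · rw [if_neg (by omega), if_neg (by omega), if_neg (by intro he; subst he; simp at h),
        mul_one]
  rw [Finset.prod_congr rfl (fun r _ => h r), Finset.prod_mul_distrib]
  congr 1
  rw [Finset.prod_ite_eq' Finset.univ (⟨t, ht⟩ : Fin n) (fun r => γ r ^ m r),
    if_pos (Finset.mem_univ _)]

lemma RR_succ (m : Fin n → ℕ) (t : ℕ) (ht : t < n) :
    RR γ m (t + 1) = RR γ m t * ((γ ⟨t, ht⟩)⁻¹) ^ (m ⟨t, ht⟩ + 1) := by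
  rw [RR, RR]
  have h : ∀ r : Fin n, (if (r : ℕ) < t + 1 then ((γ r)⁻¹) ^ (m r + 1) else 1)
      = (if (r : ℕ) < t then ((γ r)⁻¹) ^ (m r + 1) else 1) *
        (if r = ⟨t, ht⟩ then ((γ r)⁻¹) ^ (m r + 1) else 1) := by
    intro r
    rcases lt_trichotomy (r : ℕ) t with h | h | h
    · rw [if_pos (by omega), if_pos h, if_neg (by intro he; subst he; simp at h), mul_one]
    · have : r = ⟨t, ht⟩ := Fin.ext h
      rw [if_pos (by omega), if_neg (by omega), if_pos this, one_mul]
    · rw [if_neg (by omega), if_neg (by omega), if_neg (by intro he; subst he; simp at h),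
        mul_one]
  rw [Finset.prod_congr rfl (fun r _ => h r), Finset.prod_mul_distrib]
  congr 1
  rw [Finset.prod_ite_eq' Finset.univ (⟨t, ht⟩ : Fin n) (fun r => ((γ r)⁻¹) ^ (m r + 1)),
    if_pos (Finset.mem_univ _)]

/-- sum over `range j.val` as a sum over `Iio j` -/
lemma sum_range_eq_Iio (j : Fin n) (G : ℕ → k) :
    ∑ t ∈ Finset.range (j : ℕ), G t = ∑ l ∈ Finset.Iio j, G (l : ℕ) := by
  rw [← Nat.Iio_eq_range, ← Fin.map_valEmbedding_Iio, Finset.sum_map]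
  rfl

lemma EeCc_prod (hp : MultAntisym p) (l : Fin n) (m : Fin n → ℕ) :
    (∏ r, Ee p γ l r ^ m r) * (∏ r, Cc (n := n) p l r ^ m r) = QQ γ m (l : ℕ) := by
  rw [← Finset.prod_mul_distrib, QQ]
  apply Finset.prod_congr rfl
  intro r _
  have hbase : Ee p γ l r * Cc p l r = if (r : ℕ) < (l : ℕ) then γ r else 1 := by
    rcases lt_trichotomy r l with h | h | h
    · rw [Ee, Cc, if_pos h, if_neg (not_lt_of_gt h), mul_one,
        if_pos (Fin.lt_iff_val_lt_val.mp h)]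
    · subst h; rw [Ee_self, Cc_self, mul_one, if_neg (lt_irrefl _)]
    · rw [Ee, Cc, if_neg (not_lt_of_gt h), if_pos h, if_pos h,
        if_neg (not_lt_of_gt (Fin.lt_iff_val_lt_val.mp h)), mul_comm]
      exact hp.2 l r
  rw [← mul_pow, hbase]
  by_cases hc : (r : ℕ) < (l : ℕ)
  · rw [if_pos hc, if_pos hc]
  · rw [if_neg hc, if_neg hc, one_pow]

lemma cY_mul_dX (hp : MultAntisym p) (l : Fin n) (m : Fin n → ℕ) :
    dX p γ l m * cY p l m = QQ γ m (l : ℕ) * geomS (γ l) (m l) := by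
  rw [dX, cY]
  linear_combination geomS (γ l) (m l) * EeCc_prod hp l m

lemma Cc'Ep'_prod (hp : MultAntisym p) (hγ : ∀ i, γ i ≠ 0) (l : Fin n) (m : Fin n → ℕ) :
    cX' p γ l m * ((∏ r, Ep' (n := n) p l r ^ m r) * κf γ l) = RR γ m (l : ℕ) := by
  rw [cX', ← mul_assoc, ← Finset.prod_mul_distrib, κf, ← Finset.prod_mul_distrib, RR]
  apply Finset.prod_congr rfl
  intro r _
  have hbase : Cc' p γ l r * Ep' p l r = if r < l then (γ r)⁻¹ else 1 := by
    rcases lt_trichotomy r l with h | h | h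
    · rw [Cc', Ep', if_pos h, if_pos h, if_pos h, mul_inv, mul_assoc,
        inv_mul_cancel₀ (p_ne_zero hp r l), mul_one]
    · subst h; rw [Cc'_self, Ep'_self, mul_one, if_neg (lt_irrefl _)]
    · rw [Cc', Ep', if_neg (not_lt_of_gt h), if_neg (not_lt_of_gt h),
        if_neg (not_lt_of_gt h), mul_one]
  rw [← mul_pow, hbase]
  by_cases hc : r < l
  · rw [if_pos hc, if_pos (Fin.lt_iff_val_lt_val.mp hc), pow_succ]
  · rw [if_neg hc, one_pow, one_mul,
      if_neg (fun hh => hc (Fin.lt_iff_val_lt_val.mpr hh))]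

/-- main telescoping identity for `xy_eq` on the first module -/
lemma xyeqI (hp : MultAntisym p) (j : Fin n) (m : Fin n → ℕ) :
    cY p j m * dX (n := n) p γ j (m + δf j) =
      1 + γ j * (dX p γ j m * cY p j (m - δf j)) +
        ∑ l ∈ Finset.Iio j, (γ l - 1) * (dX p γ l m * cY p l (m - δf l)) := by
  have hsum : ∑ l ∈ Finset.Iio j, (γ l - 1) * (dX p γ l m * cY p l (m - δf l))
      = QQ γ m (j : ℕ) - 1 := by
    have h1 : ∀ l ∈ Finset.Iio j, (γ l - 1) * (dX p γ l m * cY p l (m - δf l))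
        = QQ γ m ((l : ℕ) + 1) - QQ γ m (l : ℕ) := by
      intro l _
      rw [cY_sub_self, cY_mul_dX hp, QQ_succ m (l : ℕ) l.isLt]
      have he : (⟨(l : ℕ), l.isLt⟩ : Fin n) = l := rfl
      rw [he, ← mul_assoc, mul_comm (γ l - 1), mul_assoc, geomS_mul_sub_one]
      ring
    rw [Finset.sum_congr rfl h1,
      ← sum_range_eq_Iio j (fun t => QQ γ m (t + 1) - QQ γ m t),
      Finset.sum_range_sub (QQ γ m), QQ_zero]
  have hEe : (∏ r, Ee p γ j r ^ (m + δf j) r) = ∏ r, Ee p γ j r ^ m r := by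
    rw [prod_pow_add, Ee_self, one_mul]
  have hL : cY p j m * dX p γ j (m + δf j)
      = QQ γ m (j : ℕ) * geomS (γ j) (m j + 1) := by
    rw [dX, add_δf_apply_same, hEe, cY]
    linear_combination geomS (γ j) (m j + 1) * EeCc_prod hp j m
  rw [hsum, cY_sub_self, cY_mul_dX hp, hL, geomS_succ]
  ring

/-- main telescoping identity for `xy_eq` on the second module -/
lemma xyeqI' (hp : MultAntisym p) (hγ : ∀ i, γ i ≠ 0) (j : Fin n) (m : Fin n → ℕ) :
    dY' p γ j m * cX' (n := n) p γ j (m - δf j) =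
      1 + γ j * (cX' p γ j m * dY' p γ j (m + δf j)) +
        ∑ l ∈ Finset.Iio j, (γ l - 1) * (cX' p γ l m * dY' p γ l (m + δf l)) := by
  have hterm : ∀ l : Fin n, cX' p γ l m * dY' p γ l (m + δf l)
      = -(RR γ m (l : ℕ) * ((γ l)⁻¹ * geomS ((γ l)⁻¹) (m l + 1))) := by
    intro l
    have hEp : (∏ r, Ep' p l r ^ (m + δf l) r) = ∏ r, Ep' (n := n) p l r ^ m r := by
      rw [prod_pow_add, Ep'_self, one_mul]
    rw [dY', add_δf_apply_same, hEp]
    have := Cc'Ep'_prod hp hγ l m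
    linear_combination (-((γ l)⁻¹ * geomS ((γ l)⁻¹) (m l + 1))) * this
  have hsum : ∑ l ∈ Finset.Iio j, (γ l - 1) * (cX' p γ l m * dY' p γ l (m + δf l))
      = RR γ m (j : ℕ) - 1 := by
    have h1 : ∀ l ∈ Finset.Iio j, (γ l - 1) * (cX' p γ l m * dY' p γ l (m + δf l))
        = RR γ m ((l : ℕ) + 1) - RR γ m (l : ℕ) := by
      intro l _
      rw [hterm l, RR_succ m (l : ℕ) l.isLt]
      have he : (⟨(l : ℕ), l.isLt⟩ : Fin n) = l := rfl
      rw [he]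
      have hgeom : (γ l - 1) * ((γ l)⁻¹ * geomS ((γ l)⁻¹) (m l + 1))
          = 1 - ((γ l)⁻¹) ^ (m l + 1) := by
        have h2 : (γ l - 1) * (γ l)⁻¹ = 1 - (γ l)⁻¹ := by
          rw [sub_mul, mul_inv_cancel₀ (hγ l), one_mul]
        rw [← mul_assoc, h2]
        have h3 := geomS_mul_sub_one ((γ l)⁻¹) (m l + 1)
        linear_combination (-1 : k) * h3
      linear_combination (-(RR γ m (l : ℕ))) * hgeom
    rw [Finset.sum_congr rfl h1,
      ← sum_range_eq_Iio j (fun t => RR γ m (t + 1) - RR γ m t),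
      Finset.sum_range_sub (RR γ m), RR_zero]
  have hLgeom : γ j * ((γ j)⁻¹ * geomS ((γ j)⁻¹) (m j + 1))
      = 1 + (γ j)⁻¹ * geomS ((γ j)⁻¹) (m j) := by
    rw [← mul_assoc, mul_inv_cancel₀ (hγ j), one_mul, geomS_succ]
  have hL : dY' p γ j m * cX' p γ j (m - δf j)
      = -(RR γ m (j : ℕ) * ((γ j)⁻¹ * geomS ((γ j)⁻¹) (m j))) := by
    rw [cX'_sub_self, dY']
    have := Cc'Ep'_prod hp hγ j m
    linear_combination (-((γ j)⁻¹ * geomS ((γ j)⁻¹) (m j))) * this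
  rw [hL, hsum, hterm j]
  linear_combination (RR γ m (j : ℕ)) * hLgeom
end HWP
namespace HWP
variable {k : Type*} [Field k] {n : ℕ}

/-! ### generic operator relations -/

lemma relZR (cc : (Fin n → ℕ) → k) (l : Fin n) :
    Zop * Rop cc l = Rop cc l * (Zop : Module.End k (Vn k n)) := by
  apply Finsupp.lhom_ext
  intro a c
  simp only [Module.End.mul_apply, Zop_single, Rop_single, one_mul, mul_one]

lemma relZL (dd : (Fin n → ℕ) → k) (l : Fin n) :
    Zop * Lop dd l = Lop dd l * (Zop : Module.End k (Vn k n)) := by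
  apply Finsupp.lhom_ext
  intro a c
  simp only [Module.End.mul_apply, Zop_single, Lop_single, one_mul, mul_one]

lemma relRR (c1 c2 : (Fin n → ℕ) → k) (i j : Fin n) (s : k)
    (h : ∀ m, c2 m * c1 (m + δf j) = s * (c1 m * c2 (m + δf i))) :
    Rop c1 i * Rop c2 j = s • (Rop c2 j * Rop c1 i : Module.End k (Vn k n)) := by
  apply Finsupp.lhom_ext
  rintro ⟨m, e⟩ c
  simp only [Module.End.mul_apply, LinearMap.smul_apply, Rop_single, Finsupp.smul_single']
  have hidx : m + δf j + δf i = m + δf i + δf j := add_right_comm m (δf j) (δf i)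
  rw [hidx]
  congr 1
  linear_combination c * h m

lemma relLL (d1 d2 : (Fin n → ℕ) → k) (i j : Fin n) (hij : i ≠ j) (s : k)
    (h1 : ∀ m, m i = 0 → d1 m = 0) (h2 : ∀ m, m j = 0 → d2 m = 0)
    (h : ∀ m, 1 ≤ m i → 1 ≤ m j →
      d2 m * d1 (m - δf j) = s * (d1 m * d2 (m - δf i))) :
    Lop d1 i * Lop d2 j = s • (Lop d2 j * Lop d1 i : Module.End k (Vn k n)) := by
  apply Finsupp.lhom_ext
  rintro ⟨m, e⟩ c
  simp only [Module.End.mul_apply, LinearMap.smul_apply, Lop_single, Finsupp.smul_single']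
  rw [sub_δf_comm m i j]
  congr 1
  by_cases hi : m i = 0
  · rw [h1 (m - δf j) (by rw [sub_δf_apply_ne m hij]; exact hi), h1 m hi]
    ring
  · by_cases hj : m j = 0
    · rw [h2 m hj, h2 (m - δf i) (by rw [sub_δf_apply_ne m (Ne.symm hij)]; exact hj)]
      ring
    · linear_combination c * h m (by omega) (by omega)

lemma relLR (d c : (Fin n → ℕ) → k) (i j : Fin n) (hij : i ≠ j) (s : k)
    (hd : ∀ m, m i = 0 → d m = 0)
    (h : ∀ m, 1 ≤ m i → c m * d (m + δf j) = s * (d m * c (m - δf i))) :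
    Lop d i * Rop c j = s • (Rop c j * Lop d i : Module.End k (Vn k n)) := by
  apply Finsupp.lhom_ext
  rintro ⟨m, e⟩ v
  simp only [Module.End.mul_apply, LinearMap.smul_apply, Rop_single, Lop_single,
    Finsupp.smul_single']
  by_cases hi : m i = 0
  · rw [hd (m + δf j) (by rw [add_δf_apply_ne m hij]; exact hi), hd m hi]
    simp
  · rw [add_sub_δf_comm m (by omega)]
    congr 1
    linear_combination v * h m (by omega)

lemma relRL (c d : (Fin n → ℕ) → k) (i j : Fin n) (hij : i ≠ j) (s : k)
    (hd : ∀ m, m j = 0 → d m = 0)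
    (h : ∀ m, 1 ≤ m j → d m * c (m - δf j) = s * (c m * d (m + δf i))) :
    Rop c i * Lop d j = s • (Lop d j * Rop c i : Module.End k (Vn k n)) := by
  apply Finsupp.lhom_ext
  rintro ⟨m, e⟩ v
  simp only [Module.End.mul_apply, LinearMap.smul_apply, Rop_single, Lop_single,
    Finsupp.smul_single']
  by_cases hj : m j = 0
  · rw [hd (m + δf i) (by rw [add_δf_apply_ne m (Ne.symm hij)]; exact hj), hd m hj]
    simp
  · rw [← add_sub_δf_comm m (by omega : 1 ≤ m j)]
    congr 1
    linear_combination v * h m (by omega)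

lemma LRsingle (cc dd : (Fin n → ℕ) → k) (l : Fin n) (m : Fin n → ℕ) (e : ℕ) (v : k) :
    (Lop dd l * Rop cc l) (Finsupp.single (m, e) v)
      = Finsupp.single ((m, e + 2) : Idx n) (cc m * dd (m + δf l) * v) := by
  simp only [Module.End.mul_apply, Rop_single, Lop_single]
  rw [add_sub_δf]
  congr 1
  ring

lemma RLsingle (cc dd : (Fin n → ℕ) → k) (l : Fin n)
    (hdd : ∀ m, m l = 0 → dd m = 0) (m : Fin n → ℕ) (e : ℕ) (v : k) :
    (Rop cc l * Lop dd l) (Finsupp.single (m, e) v)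
      = Finsupp.single ((m, e + 2) : Idx n) (dd m * cc (m - δf l) * v) := by
  simp only [Module.End.mul_apply, Lop_single, Rop_single]
  by_cases hl : m l = 0
  · rw [hdd m hl]
    simp
  · rw [sub_add_δf m l (by omega)]
    congr 1
    ring

lemma ZZsingle (m : Fin n → ℕ) (e : ℕ) (v : k) :
    ((Zop * Zop : Module.End k (Vn k n))) (Finsupp.single ((m, e) : Idx n) v)
      = Finsupp.single ((m, e + 2) : Idx n) v := by
  simp only [Module.End.mul_apply, Zop_single]

/-- generic `xy_eq` relation, first-module orientation -/
lemma relEqLR (cc dd : Fin n → (Fin n → ℕ) → k) (gs : Fin n → k) (j : Fin n)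
    (hdd : ∀ l m, m l = 0 → dd l m = 0)
    (h : ∀ m, cc j m * dd j (m + δf j)
      = 1 + gs j * (dd j m * cc j (m - δf j))
        + ∑ l ∈ Finset.Iio j, (gs l - 1) * (dd l m * cc l (m - δf l))) :
    Lop (dd j) j * Rop (cc j) j
      = (Zop * Zop : Module.End k (Vn k n)) + gs j • (Rop (cc j) j * Lop (dd j) j)
        + ∑ l ∈ Finset.Iio j, (gs l - 1) • (Rop (cc l) l * Lop (dd l) l) := by
  apply Finsupp.lhom_ext
  rintro ⟨m, e⟩ v
  rw [LinearMap.add_apply, LinearMap.add_apply, LinearMap.sum_apply,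
    LRsingle, ZZsingle, LinearMap.smul_apply, RLsingle _ _ _ (hdd j),
    Finsupp.smul_single']
  have hterm : ∀ l ∈ Finset.Iio j,
      ((gs l - 1) • (Rop (cc l) l * Lop (dd l) l)) (Finsupp.single ((m, e) : Idx n) v)
        = Finsupp.single ((m, e + 2) : Idx n)
            ((gs l - 1) * (dd l m * cc l (m - δf l)) * v) := by
    intro l _
    rw [LinearMap.smul_apply, RLsingle _ _ _ (hdd l), Finsupp.smul_single']
    congr 1
    ring
  rw [Finset.sum_congr rfl hterm, ← Finsupp.single_add]
  have hsum : ∑ l ∈ Finset.Iio j, Finsupp.single ((m, e + 2) : Idx n)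
        ((gs l - 1) * (dd l m * cc l (m - δf l)) * v)
      = Finsupp.single ((m, e + 2) : Idx n)
        (∑ l ∈ Finset.Iio j, (gs l - 1) * (dd l m * cc l (m - δf l)) * v) := by
    rw [Finsupp.single_finset_sum]
  rw [hsum, ← Finsupp.single_add]
  congr 1
  rw [Finset.sum_congr rfl (fun l _ => by ring :
    ∀ l ∈ Finset.Iio j, (gs l - 1) * (dd l m * cc l (m - δf l)) * v
      = (gs l - 1) * (dd l m * cc l (m - δf l)) * v), ← Finset.sum_mul]
  linear_combination v * h m

/-- generic `xy_eq` relation, second-module orientation -/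
lemma relEqRL (cc dd : Fin n → (Fin n → ℕ) → k) (gs : Fin n → k) (j : Fin n)
    (hdd : ∀ l m, m l = 0 → dd l m = 0)
    (h : ∀ m, dd j m * cc j (m - δf j)
      = 1 + gs j * (cc j m * dd j (m + δf j))
        + ∑ l ∈ Finset.Iio j, (gs l - 1) * (cc l m * dd l (m + δf l))) :
    Rop (cc j) j * Lop (dd j) j
      = (Zop * Zop : Module.End k (Vn k n)) + gs j • (Lop (dd j) j * Rop (cc j) j)
        + ∑ l ∈ Finset.Iio j, (gs l - 1) • (Lop (dd l) l * Rop (cc l) l) := by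
  apply Finsupp.lhom_ext
  rintro ⟨m, e⟩ v
  rw [LinearMap.add_apply, LinearMap.add_apply, LinearMap.sum_apply,
    RLsingle _ _ _ (hdd j), ZZsingle, LinearMap.smul_apply, LRsingle,
    Finsupp.smul_single']
  have hterm : ∀ l ∈ Finset.Iio j,
      ((gs l - 1) • (Lop (dd l) l * Rop (cc l) l)) (Finsupp.single ((m, e) : Idx n) v)
        = Finsupp.single ((m, e + 2) : Idx n)
            ((gs l - 1) * (cc l m * dd l (m + δf l)) * v) := by
    intro l _
    rw [LinearMap.smul_apply, LRsingle, Finsupp.smul_single']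
    congr 1
    ring
  rw [Finset.sum_congr rfl hterm, ← Finsupp.single_add, ← Finsupp.single_finset_sum,
    ← Finsupp.single_add]
  congr 1
  rw [← Finset.sum_mul]
  linear_combination v * h m

end HWP
namespace HWP
variable {k : Type*} [Field k] {n : ℕ}

section Rep
variable (p : Matrix (Fin n) (Fin n) k) (γ : Fin n → k)

noncomputable def genV : HWGen n → Module.End k (Vn k n)
  | .z => Zop
  | .x i => Lop (dX p γ i) i
  | .y i => Rop (cY p i) i

noncomputable def genV' : HWGen n → Module.End k (Vn k n)
  | .z => Zop
  | .x i => Rop (cX' p γ i) i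
  | .y i => Lop (dY' p γ i) i

theorem relSoundV (hp : MultAntisym p) :
    ∀ ⦃a b : FreeAlgebra k (HWGen n)⦄, HWRel k p γ a b →
      FreeAlgebra.lift k (genV p γ) a = FreeAlgebra.lift k (genV p γ) b := by
  intro a b h
  cases h with
  | zx i =>
      simp only [map_mul, FreeAlgebra.lift_ι_apply, genV]
      exact relZL _ _
  | zy i =>
      simp only [map_mul, FreeAlgebra.lift_ι_apply, genV]
      exact relZR _ _
  | yy i j =>
      simp only [map_mul, map_smul, FreeAlgebra.lift_ι_apply, genV]
      exact relRR _ _ i j _ (fun m => yyI hp i j m)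
  | xx i j hij =>
      simp only [map_mul, map_smul, FreeAlgebra.lift_ι_apply, genV]
      exact relLL _ _ i j (ne_of_lt hij) _ (fun m h => dX_zero h) (fun m h => dX_zero h)
        (fun m hi hj => xxI hp i j hij m hi hj)
  | xy_lt i j hij =>
      simp only [map_mul, map_smul, FreeAlgebra.lift_ι_apply, genV]
      exact relLR _ _ i j (ne_of_lt hij) _ (fun m h => dX_zero h)
        (fun m hi => xyltI hp i j hij m hi)
  | xy_gt i j hij =>
      simp only [map_mul, map_smul, FreeAlgebra.lift_ι_apply, genV]
      exact relLR _ _ i j (Ne.symm (ne_of_lt hij)) _ (fun m h => dX_zero h)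
        (fun m hi => xygtI hp i j hij m hi)
  | xy_eq j =>
      simp only [map_mul, map_add, map_smul, map_sum, FreeAlgebra.lift_ι_apply, genV]
      exact relEqLR (cY p) (dX p γ) γ j (fun l m h => dX_zero h) (fun m => xyeqI hp j m)

theorem relSoundV' (hp : MultAntisym p) (hγ : ∀ i, γ i ≠ 0) :
    ∀ ⦃a b : FreeAlgebra k (HWGen n)⦄, HWRel k p γ a b →
      FreeAlgebra.lift k (genV' p γ) a = FreeAlgebra.lift k (genV' p γ) b := by
  intro a b h
  cases h with
  | zx i =>
      simp only [map_mul, FreeAlgebra.lift_ι_apply, genV']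
      exact relZR _ _
  | zy i =>
      simp only [map_mul, FreeAlgebra.lift_ι_apply, genV']
      exact relZL _ _
  | yy i j =>
      simp only [map_mul, map_smul, FreeAlgebra.lift_ι_apply, genV']
      by_cases hij : i = j
      · subst hij
        rw [hp.1, one_smul]
      · exact relLL _ _ i j hij _ (fun m h => dY'_zero h) (fun m h => dY'_zero h)
          (fun m hi hj => yy'I hp i j hij m hi hj)
  | xx i j hij =>
      simp only [map_mul, map_smul, FreeAlgebra.lift_ι_apply, genV']
      exact relRR _ _ i j _ (fun m => xx'I hp hγ i j hij m)
  | xy_lt i j hij =>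
      simp only [map_mul, map_smul, FreeAlgebra.lift_ι_apply, genV']
      exact relRL _ _ i j (ne_of_lt hij) _ (fun m h => dY'_zero h)
        (fun m hj => xylt'I hp i j hij m hj)
  | xy_gt i j hij =>
      simp only [map_mul, map_smul, FreeAlgebra.lift_ι_apply, genV']
      exact relRL _ _ i j (Ne.symm (ne_of_lt hij)) _ (fun m h => dY'_zero h)
        (fun m hj => xygt'I hp hγ i j hij m hj)
  | xy_eq j =>
      simp only [map_mul, map_add, map_smul, map_sum, FreeAlgebra.lift_ι_apply, genV']
      exact relEqRL (cX' p γ) (dY' p γ) γ j (fun l m h => dY'_zero h)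
        (fun m => xyeqI' hp hγ j m)

noncomputable def φV (hp : MultAntisym p) : HWAlg k p γ →ₐ[k] Module.End k (Vn k n) :=
  RingQuot.liftAlgHom k ⟨FreeAlgebra.lift k (genV p γ), relSoundV p γ hp⟩

noncomputable def φV' (hp : MultAntisym p) (hγ : ∀ i, γ i ≠ 0) :
    HWAlg k p γ →ₐ[k] Module.End k (Vn k n) :=
  RingQuot.liftAlgHom k ⟨FreeAlgebra.lift k (genV' p γ), relSoundV' p γ hp hγ⟩

variable (hp : MultAntisym p) (hγ : ∀ i, γ i ≠ 0)

lemma φV_Z : φV p γ hp (hwZ k p γ) = (Zop : Module.End k (Vn k n)) := by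
  rw [hwZ, φV, RingQuot.liftAlgHom_mkAlgHom_apply, FreeAlgebra.lift_ι_apply, genV]
lemma φV_X (i : Fin n) : φV p γ hp (hwX k p γ i) = Lop (dX p γ i) i := by
  rw [hwX, φV, RingQuot.liftAlgHom_mkAlgHom_apply, FreeAlgebra.lift_ι_apply, genV]
lemma φV_Y (i : Fin n) : φV p γ hp (hwY k p γ i) = Rop (cY p i) i := by
  rw [hwY, φV, RingQuot.liftAlgHom_mkAlgHom_apply, FreeAlgebra.lift_ι_apply, genV]
lemma φV'_Z : φV' p γ hp hγ (hwZ k p γ) = (Zop : Module.End k (Vn k n)) := by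
  rw [hwZ, φV', RingQuot.liftAlgHom_mkAlgHom_apply, FreeAlgebra.lift_ι_apply, genV']
lemma φV'_X (i : Fin n) : φV' p γ hp hγ (hwX k p γ i) = Rop (cX' p γ i) i := by
  rw [hwX, φV', RingQuot.liftAlgHom_mkAlgHom_apply, FreeAlgebra.lift_ι_apply, genV']
lemma φV'_Y (i : Fin n) : φV' p γ hp hγ (hwY k p γ i) = Lop (dY' p γ i) i := by
  rw [hwY, φV', RingQuot.liftAlgHom_mkAlgHom_apply, FreeAlgebra.lift_ι_apply, genV']

end Rep
end HWP
namespace HWP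
variable {k : Type*} [Field k] {n : ℕ}

lemma Zop_apply_ite (w : Vn k n) (q : Fin n → ℕ) (E : ℕ) :
    (Zop w) (q, E) = if 1 ≤ E then w (q, E - 1) else 0 := by
  match E with
  | 0 => rw [Zop_apply_zero, if_neg (by omega)]
  | (E + 1) => rw [Zop_apply_succ, if_pos (by omega)]; norm_num

lemma Lop_apply_ite (dd : (Fin n → ℕ) → k) (l : Fin n)
    (hdd : ∀ m, m l = 0 → dd m = 0) (w : Vn k n) (q : Fin n → ℕ) (E : ℕ) :
    (Lop dd l w) (q, E) = if 2 ≤ E then dd (q + δf l) * w (q + δf l, E - 2) else 0 := by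
  match E with
  | 0 => rw [Lop_apply_zero, if_neg (by omega)]
  | 1 => rw [Lop_apply_one, if_neg (by omega)]
  | (E + 2) => rw [Lop_apply_two _ _ hdd, if_pos (by omega)]; norm_num

lemma δf_ne {t r : Fin n} (h : r ≠ t) : δf t r = 0 := by simp [δf, h]

lemma δf_sub_self (t : Fin n) : δf t - δf t = (0 : Fin n → ℕ) := by
  funext r; simp [δf]
lemma pair_sub1 (t m' : Fin n) : (δf t + δf m') - δf t = δf m' := by
  rw [add_comm]; exact add_sub_δf (δf m') t
lemma pair_sub2 (t m' : Fin n) : (δf t + δf m') - δf m' = δf t :=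
  add_sub_δf (δf t) m'
lemma pair_apply_ne (t m' l : Fin n) (h1 : l ≠ t) (h2 : l ≠ m') :
    (δf t + δf m') l = 0 := by
  simp [δf, Pi.add_apply, h1, h2]
lemma pair_apply_left (t m' : Fin n) (h : t ≠ m') : (δf t + δf m') t = 1 := by
  simp [δf, Pi.add_apply, h]
lemma pair_apply_right (t m' : Fin n) (h : t ≠ m') : (δf t + δf m') m' = 1 := by
  simp [δf, Pi.add_apply, Ne.symm h]

section W
variable (av : k) (cL cR : Fin n → k) (A B : Fin n → (Fin n → ℕ) → k)

noncomputable def Wop : Module.End k (Vn k n) :=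
  av • Zop + ∑ l, (cL l • Lop (A l) l + cR l • Rop (B l) l)

lemma Wop_apply (w : Vn k n) (pt : Idx n) :
    (Wop av cL cR A B w) pt
      = av * (Zop w) pt
        + ∑ l, (cL l * (Lop (A l) l w) pt + cR l * (Rop (B l) l w) pt) := by
  rw [Wop]
  simp only [LinearMap.add_apply, LinearMap.smul_apply, LinearMap.sum_apply,
    Finsupp.add_apply, Finsupp.smul_apply, Finsupp.finset_sum_apply, smul_eq_mul]

lemma Wop_apply_02 (hA : ∀ l m, m l = 0 → A l m = 0) (w : Vn k n) :
    (Wop av cL cR A B w) ((0 : Fin n → ℕ), (2 : ℕ))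
      = av * w (0, 1) + ∑ l, cL l * (A l (δf l) * w (δf l, 0)) := by
  rw [Wop_apply, Zop_apply_ite]
  norm_num
  apply Finset.sum_congr rfl
  intro l _
  rw [Lop_apply_ite _ _ (hA l), Rop_apply_zero _ _ _ _ _ (Pi.zero_apply l)]
  norm_num [zero_add]

lemma Wop_apply_d1 (m' : Fin n) (w : Vn k n) :
    (Wop av cL cR A B w) (δf m', (1 : ℕ))
      = av * w (δf m', 0) + cR m' * (B m' 0 * w (0, 1)) := by
  rw [Wop_apply, Zop_apply_ite]
  norm_num
  have hsum : ∀ l : Fin n,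
      (cL l * (Lop (A l) l w) (δf m', 1) + cR l * (Rop (B l) l w) (δf m', 1))
        = if l = m' then cR m' * (B m' 0 * w (0, 1)) else 0 := by
    intro l
    rw [Lop_apply_one]
    by_cases hl : l = m'
    · subst hl
      rw [Rop_apply_pos _ _ _ _ _ (by rw [δf]; simp), δf_sub_self, if_pos rfl]
      ring
    · rw [Rop_apply_zero _ _ _ _ _ (δf_ne hl), if_neg hl]
      ring
  rw [Finset.sum_congr rfl (fun l _ => hsum l), Finset.sum_ite_eq' Finset.univ m',
    if_pos (Finset.mem_univ m')]

lemma Wop_apply_d0 (m' : Fin n) (w : Vn k n) :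
    (Wop av cL cR A B w) (δf m', (0 : ℕ))
      = cR m' * (B m' 0 * w (0, 0)) := by
  rw [Wop_apply, Zop_apply_zero]
  have hsum : ∀ l : Fin n,
      (cL l * (Lop (A l) l w) (δf m', 0) + cR l * (Rop (B l) l w) (δf m', 0))
        = if l = m' then cR m' * (B m' 0 * w (0, 0)) else 0 := by
    intro l
    rw [Lop_apply_zero]
    by_cases hl : l = m'
    · subst hl
      rw [Rop_apply_pos _ _ _ _ _ (by rw [δf]; simp), δf_sub_self, if_pos rfl]
      ring
    · rw [Rop_apply_zero _ _ _ _ _ (δf_ne hl), if_neg hl]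
      ring
  rw [Finset.sum_congr rfl (fun l _ => hsum l), Finset.sum_ite_eq' Finset.univ m',
    if_pos (Finset.mem_univ m')]
  ring

lemma Wop_apply_pair_same (t : Fin n) (w : Vn k n) :
    (Wop av cL cR A B w) (δf t + δf t, (0 : ℕ))
      = cR t * (B t (δf t) * w (δf t, 0)) := by
  rw [Wop_apply, Zop_apply_zero]
  have hsum : ∀ l : Fin n,
      (cL l * (Lop (A l) l w) (δf t + δf t, 0) + cR l * (Rop (B l) l w) (δf t + δf t, 0))
        = if l = t then cR t * (B t (δf t) * w (δf t, 0)) else 0 := by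
    intro l
    rw [Lop_apply_zero]
    by_cases hl : l = t
    · subst hl
      rw [Rop_apply_pos _ _ _ _ _ (by simp [δf, Pi.add_apply]), add_sub_δf, if_pos rfl]
      ring
    · rw [Rop_apply_zero _ _ _ _ _ (by simp [δf, Pi.add_apply, hl]), if_neg hl]
      ring
  rw [Finset.sum_congr rfl (fun l _ => hsum l), Finset.sum_ite_eq' Finset.univ t,
    if_pos (Finset.mem_univ t)]
  ring

lemma Wop_apply_pair (t m' : Fin n) (h : t ≠ m') (w : Vn k n) :
    (Wop av cL cR A B w) (δf t + δf m', (0 : ℕ))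
      = cR t * (B t (δf m') * w (δf m', 0)) + cR m' * (B m' (δf t) * w (δf t, 0)) := by
  classical
  rw [Wop_apply, Zop_apply_zero]
  have hz : ∀ l ∈ Finset.univ, l ∉ ({t, m'} : Finset (Fin n)) →
      (cL l * (Lop (A l) l w) (δf t + δf m', 0)
        + cR l * (Rop (B l) l w) (δf t + δf m', 0)) = 0 := by
    intro l _ hl
    simp only [Finset.mem_insert, Finset.mem_singleton, not_or] at hl
    rw [Lop_apply_zero, Rop_apply_zero _ _ _ _ _ (pair_apply_ne t m' l hl.1 hl.2)]
    ring
  rw [← Finset.sum_subset (Finset.subset_univ ({t, m'} : Finset (Fin n))) hz,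
    Finset.sum_pair h]
  rw [Lop_apply_zero, Lop_apply_zero,
    Rop_apply_pos _ _ _ _ _ (by rw [pair_apply_left t m' h]),
    Rop_apply_pos _ _ _ _ _ (by rw [pair_apply_right t m' h]),
    pair_sub1, pair_sub2]
  ring

end W
end HWP
open HWP in
/-- Every degree-one normal element of `H_n^{p,γ}` is a scalar multiple of `z`:
if `u = a • z + ∑ i (α i • x i + β i • y i)` is normal then all `α i = β i = 0`. -/
theorem hw_degree_one_normal {k : Type*} [Field k] {n : ℕ}
    (p : Matrix (Fin n) (Fin n) k) (hp : MultAntisym p)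
    (γ : Fin n → k) (hγ : ∀ i, γ i ≠ 0)
    (a : k) (α β : Fin n → k)
    (u : HWAlg k p γ)
    (hu : u = a • hwZ k p γ + ∑ i, (α i • hwX k p γ i + β i • hwY k p γ i))
    (hnorm₁ : ∀ r : HWAlg k p γ, ∃ s, u * r = s * u)
    (hnorm₂ : ∀ r : HWAlg k p γ, ∃ s, r * u = u * s) :
    ∀ i, α i = 0 ∧ β i = 0 := by
  classical
  intro j
  constructor
  · -- α j = 0 via the second module
    by_contra hα
    obtain ⟨s, hs⟩ := hnorm₂ (hwY k p γ j)
    have hU : φV' p γ hp hγ u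
        = Wop a β α (fun l => dY' p γ l) (fun l => cX' p γ l) := by
      rw [hu, map_add, map_smul, map_sum, φV'_Z, Wop]
      congr 1
      apply Finset.sum_congr rfl
      intro l _
      rw [map_add, map_smul, map_smul, φV'_X, φV'_Y, add_comm]
    have hmul : φV' p γ hp hγ (hwY k p γ j * u) = φV' p γ hp hγ (u * s) := by rw [hs]
    rw [map_mul, map_mul, φV'_Y, hU] at hmul
    set W := Wop a β α (fun l => dY' p γ l) (fun l => cX' p γ l) with hW
    set e00 : Vn k n := Finsupp.single ((0 : Fin n → ℕ), (0 : ℕ)) (1 : k) with he00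
    set v : Vn k n := (φV' p γ hp hγ s) e00 with hv
    have hvec : Lop (dY' p γ j) j (W e00) = W v := by
      have h2 := congrArg (fun (T : Module.End k (Vn k n)) => T e00) hmul
      simpa only [Module.End.mul_apply] using h2
    have hA : ∀ (l : Fin n) m, m l = 0 → dY' p γ l m = 0 := fun l m h => dY'_zero h
    have he1 : e00 ((0 : Fin n → ℕ), (0 : ℕ)) = 1 := Finsupp.single_eq_same
    -- E3 : at (δf j + δf j, 0)
    have E3 := DFunLike.congr_fun hvec (δf j + δf j, (0 : ℕ))
    rw [Lop_apply_ite _ _ (hA j), if_neg (by omega), Wop_apply_pair_same] at E3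
    have hvj : v (δf j, 0) = 0 := by
      have h3 : α j * (cX' p γ j (δf j) * v (δf j, 0)) = 0 := E3.symm
      rw [cX'_δf, Cc'_self, one_mul] at h3
      exact (mul_eq_zero.mp h3).resolve_left hα
    -- E2 : at (δf j, 1)
    have E2 := DFunLike.congr_fun hvec (δf j, (1 : ℕ))
    rw [Lop_apply_ite _ _ (hA j), if_neg (by omega), Wop_apply_d1] at E2
    have hv01 : v ((0 : Fin n → ℕ), 1) = 0 := by
      have h3 : a * v (δf j, 0) + α j * (cX' p γ j 0 * v (0, 1)) = 0 := E2.symm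
      rw [hvj, mul_zero, zero_add, cX'_zero, one_mul] at h3
      exact (mul_eq_zero.mp h3).resolve_left hα
    -- E4 : at (δf j + δf m', 0) for m' ≠ j
    have hvm : ∀ m' : Fin n, v (δf m', 0) = 0 := by
      intro m'
      by_cases hm : m' = j
      · subst hm; exact hvj
      · have E4 := DFunLike.congr_fun hvec (δf j + δf m', (0 : ℕ))
        rw [Lop_apply_ite _ _ (hA j), if_neg (by omega),
          Wop_apply_pair _ _ _ _ _ j m' (Ne.symm hm)] at E4
        have h3 : α j * (cX' p γ j (δf m') * v (δf m', 0))
            + α m' * (cX' p γ m' (δf j) * v (δf j, 0)) = 0 := E4.symm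
        rw [hvj, mul_zero, mul_zero, add_zero, cX'_δf] at h3
        have h4 := (mul_eq_zero.mp h3).resolve_left hα
        exact (mul_eq_zero.mp h4).resolve_left (Cc'_ne_zero hp hγ j m')
    -- E1 : at (0, 2)
    have E1 := DFunLike.congr_fun hvec ((0 : Fin n → ℕ), (2 : ℕ))
    rw [Lop_apply_ite _ _ (hA j), if_pos (by omega), Wop_apply_02 _ _ _ _ _ hA] at E1
    rw [zero_add] at E1
    rw [Wop_apply_d0, cX'_zero, he1, one_mul, mul_one] at E1
    rw [hv01, mul_zero, zero_add] at E1
    have hsum0 : ∑ l, β l * (dY' p γ l (δf l) * v (δf l, 0)) = 0 := by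
      apply Finset.sum_eq_zero
      intro l _
      rw [hvm l, mul_zero, mul_zero]
    rw [hsum0] at E1
    have hfin : dY' p γ j (δf j) * α j = 0 := E1
    have hne : dY' p γ j (δf j) ≠ 0 := by
      rw [dY'_δf_self]
      exact neg_ne_zero.mpr (mul_ne_zero (κf_ne_zero hγ j) (inv_ne_zero (hγ j)))
    exact hα ((mul_eq_zero.mp hfin).resolve_left hne)
  · -- β j = 0 via the first module
    by_contra hβ
    obtain ⟨s, hs⟩ := hnorm₂ (hwX k p γ j)
    have hU : φV p γ hp u
        = Wop a α β (fun l => dX p γ l) (fun l => cY p l) := by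
      rw [hu, map_add, map_smul, map_sum, φV_Z, Wop]
      congr 1
      apply Finset.sum_congr rfl
      intro l _
      rw [map_add, map_smul, map_smul, φV_X, φV_Y]
    have hmul : φV p γ hp (hwX k p γ j * u) = φV p γ hp (u * s) := by rw [hs]
    rw [map_mul, map_mul, φV_X, hU] at hmul
    set W := Wop a α β (fun l => dX p γ l) (fun l => cY p l) with hW
    set e00 : Vn k n := Finsupp.single ((0 : Fin n → ℕ), (0 : ℕ)) (1 : k) with he00
    set v : Vn k n := (φV p γ hp s) e00 with hv
    have hvec : Lop (dX p γ j) j (W e00) = W v := by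
      have h2 := congrArg (fun (T : Module.End k (Vn k n)) => T e00) hmul
      simpa only [Module.End.mul_apply] using h2
    have hA : ∀ (l : Fin n) m, m l = 0 → dX p γ l m = 0 := fun l m h => dX_zero h
    have he1 : e00 ((0 : Fin n → ℕ), (0 : ℕ)) = 1 := Finsupp.single_eq_same
    have E3 := DFunLike.congr_fun hvec (δf j + δf j, (0 : ℕ))
    rw [Lop_apply_ite _ _ (hA j), if_neg (by omega), Wop_apply_pair_same] at E3
    have hvj : v (δf j, 0) = 0 := by
      have h3 : β j * (cY p j (δf j) * v (δf j, 0)) = 0 := E3.symm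
      rw [cY_δf, Cc_self, one_mul] at h3
      exact (mul_eq_zero.mp h3).resolve_left hβ
    have E2 := DFunLike.congr_fun hvec (δf j, (1 : ℕ))
    rw [Lop_apply_ite _ _ (hA j), if_neg (by omega), Wop_apply_d1] at E2
    have hv01 : v ((0 : Fin n → ℕ), 1) = 0 := by
      have h3 : a * v (δf j, 0) + β j * (cY p j 0 * v (0, 1)) = 0 := E2.symm
      rw [hvj, mul_zero, zero_add, cY_zero, one_mul] at h3
      exact (mul_eq_zero.mp h3).resolve_left hβ
    have hvm : ∀ m' : Fin n, v (δf m', 0) = 0 := by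
      intro m'
      by_cases hm : m' = j
      · subst hm; exact hvj
      · have E4 := DFunLike.congr_fun hvec (δf j + δf m', (0 : ℕ))
        rw [Lop_apply_ite _ _ (hA j), if_neg (by omega),
          Wop_apply_pair _ _ _ _ _ j m' (Ne.symm hm)] at E4
        have h3 : β j * (cY p j (δf m') * v (δf m', 0))
            + β m' * (cY p m' (δf j) * v (δf j, 0)) = 0 := E4.symm
        rw [hvj, mul_zero, mul_zero, add_zero, cY_δf] at h3
        have h4 := (mul_eq_zero.mp h3).resolve_left hβ
        exact (mul_eq_zero.mp h4).resolve_left (Cc_ne_zero hp j m')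
    have E1 := DFunLike.congr_fun hvec ((0 : Fin n → ℕ), (2 : ℕ))
    rw [Lop_apply_ite _ _ (hA j), if_pos (by omega), Wop_apply_02 _ _ _ _ _ hA] at E1
    rw [zero_add] at E1
    rw [Wop_apply_d0, cY_zero, he1, one_mul, mul_one] at E1
    rw [hv01, mul_zero, zero_add] at E1
    have hsum0 : ∑ l, α l * (dX p γ l (δf l) * v (δf l, 0)) = 0 := by
      apply Finset.sum_eq_zero
      intro l _
      rw [hvm l, mul_zero, mul_zero]
    rw [hsum0] at E1
    have hfin : dX p γ j (δf j) * β j = 0 := E1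
    rw [dX_δf_self, one_mul] at hfin
    exact hβ hfin
end

section
/- Suppose a,b,c,d,γ,μ ∈ k with ad − bc ≠ 0, γ ≠ 1, and in the quantum plane with relation x y = μ y x the element (a x + b y)(c x + d y) − γ (c x + d y)(a x + b y) vanishes. Then either (b = c = 0, a,d ≠ 0 and μ = γ) or (a = d = 0, b,c ≠ 0 and μ = γ^{-1}). -/
/-- Relations of the quantum plane `O_μ(k^2)`: `x * y = μ • (y * x)`. -/
inductive QPRel (k : Type*) [Field k] (q : k) :
    FreeAlgebra k (Fin 2) → FreeAlgebra k (Fin 2) → Prop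
  | rel : QPRel k q (FreeAlgebra.ι k (0 : Fin 2) * FreeAlgebra.ι k (1 : Fin 2))
      (q • (FreeAlgebra.ι k (1 : Fin 2) * FreeAlgebra.ι k (0 : Fin 2)))

/-- The quantum plane `O_q(k^2)`. -/
abbrev QPlane (k : Type*) [Field k] (q : k) := RingQuot (QPRel k q)

/-- The generator `x` of the quantum plane. -/
noncomputable def qpX (k : Type*) [Field k] (q : k) : QPlane k q :=
  RingQuot.mkAlgHom k (QPRel k q) (FreeAlgebra.ι k (0 : Fin 2))

/-- The generator `y` of the quantum plane. -/
noncomputable def qpY (k : Type*) [Field k] (q : k) : QPlane k q :=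
  RingQuot.mkAlgHom k (QPRel k q) (FreeAlgebra.ι k (1 : Fin 2))

noncomputable def qpOpX (k : Type*) [Field k] : Module.End k (Polynomial k) :=
  LinearMap.mulLeft k Polynomial.X

noncomputable def qpOpY (k : Type*) [Field k] (q : k) : Module.End k (Polynomial k) :=
  (Polynomial.aeval (Polynomial.C q⁻¹ * Polynomial.X)).toLinearMap

lemma qpOp_rel (k : Type*) [Field k] (q : k) (hq : q ≠ 0) :
    qpOpX k * qpOpY k q = q • (qpOpY k q * qpOpX k) := by
  apply LinearMap.ext
  intro p
  simp only [qpOpX, qpOpY, Module.End.mul_apply, LinearMap.smul_apply,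
    LinearMap.mulLeft_apply, AlgHom.toLinearMap_apply, map_mul, Polynomial.aeval_X,
    Polynomial.smul_eq_C_mul]
  have h : Polynomial.C q * (Polynomial.C q⁻¹ * Polynomial.X) = Polynomial.X := by
    rw [← mul_assoc, ← Polynomial.C_mul, mul_inv_cancel₀ hq, Polynomial.C_1, one_mul]
  rw [← mul_assoc, h]

noncomputable def qpRep (k : Type*) [Field k] (q : k) (hq : q ≠ 0) :
    QPlane k q →ₐ[k] Module.End k (Polynomial k) :=
  RingQuot.liftAlgHom k ⟨FreeAlgebra.lift k ![qpOpX k, qpOpY k q], by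
    rintro _ _ ⟨⟩
    simp only [map_mul, map_smul, FreeAlgebra.lift_ι_apply, Matrix.cons_val_zero,
      Matrix.cons_val_one, Matrix.head_cons]
    exact qpOp_rel k q hq⟩

lemma qpRep_X (k : Type*) [Field k] (q : k) (hq : q ≠ 0) :
    qpRep k q hq (qpX k q) = qpOpX k := by
  simp [qpRep, qpX, RingQuot.liftAlgHom_mkAlgHom_apply]

lemma qpRep_Y (k : Type*) [Field k] (q : k) (hq : q ≠ 0) :
    qpRep k q hq (qpY k q) = qpOpY k q := by
  simp [qpRep, qpY, RingQuot.liftAlgHom_mkAlgHom_apply]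

/-- If `ad - bc ≠ 0`, `γ ≠ 1`, and `(ax + by)(cx + dy) − γ(cx + dy)(ax + by) = 0`
in the quantum plane with relation `xy = μ yx`, then either `b = c = 0`,
`a, d ≠ 0` and `μ = γ`, or `a = d = 0`, `b, c ≠ 0` and `μ = γ⁻¹`. -/
theorem qplane_coeff_computation {k : Type*} [Field k] (μ γ : k)
    (hμ : μ ≠ 0) (hγ0 : γ ≠ 0) (hγ1 : γ ≠ 1)
    (a b c d : k) (hdet : a * d - b * c ≠ 0)
    (heq : (a • qpX k μ + b • qpY k μ) * (c • qpX k μ + d • qpY k μ) -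
        γ • ((c • qpX k μ + d • qpY k μ) * (a • qpX k μ + b • qpY k μ)) = 0) :
    (b = 0 ∧ c = 0 ∧ a ≠ 0 ∧ d ≠ 0 ∧ μ = γ) ∨
      (a = 0 ∧ d = 0 ∧ b ≠ 0 ∧ c ≠ 0 ∧ μ = γ⁻¹) := by
  have h0 := congrArg (fun z => (qpRep k μ hμ z) (1 : Polynomial k)) heq
  simp only [map_sub, map_add, map_mul, map_smul, map_zero, qpRep_X, qpRep_Y,
    LinearMap.sub_apply, LinearMap.add_apply, LinearMap.smul_apply, Module.End.mul_apply,
    LinearMap.zero_apply, qpOpX, qpOpY, LinearMap.mulLeft_apply, AlgHom.toLinearMap_apply,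
    map_one, map_add, Polynomial.aeval_X, mul_one, smul_add] at h0
  have h2 := congrArg (fun p => Polynomial.coeff p 2) h0
  have h1 := congrArg (fun p => Polynomial.coeff p 1) h0
  have hcc := congrArg (fun p => Polynomial.coeff p 0) h0
  simp only [Polynomial.coeff_sub, Polynomial.coeff_add, Polynomial.coeff_smul,
    Polynomial.coeff_zero, Polynomial.coeff_one, Polynomial.coeff_C_mul,
    Polynomial.coeff_X, ← sq, Polynomial.coeff_X_pow, smul_eq_mul] at h2 h1 hcc
  norm_num at h2 h1 hcc
  have hinv : μ * μ⁻¹ = 1 := mul_inv_cancel₀ hμ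
  have hginv : γ * γ⁻¹ = 1 := mul_inv_cancel₀ hγ0
  have hac : a * c = 0 := by
    rcases mul_eq_zero.mp (show (a * c) * (1 - γ) = 0 by linear_combination h2) with h | h
    · exact h
    · exact absurd (by linear_combination -h) hγ1
  have hbd : b * d = 0 := by
    rcases mul_eq_zero.mp (show (b * d) * (1 - γ) = 0 by linear_combination hcc) with h | h
    · exact h
    · exact absurd (by linear_combination -h) hγ1
  by_cases ha : a = 0
  · have hbc : b * c ≠ 0 := fun h => hdet (by rw [ha, h]; ring)
    have hb : b ≠ 0 := left_ne_zero_of_mul hbc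
    have hc : c ≠ 0 := right_ne_zero_of_mul hbc
    have hd : d = 0 := by
      rcases mul_eq_zero.mp hbd with h | h
      · exact absurd h hb
      · exact h
    subst ha; subst hd
    refine Or.inr ⟨rfl, rfl, hb, hc, ?_⟩
    have key : (b * c) * (μ - γ⁻¹) = 0 := by
      linear_combination (-(μ * γ⁻¹)) * h1 + (b * c * γ⁻¹) * hinv - (b * c * μ) * hginv
    rcases mul_eq_zero.mp key with h | h
    · exact absurd h hbc
    · linear_combination h
  · have hc : c = 0 := by
      rcases mul_eq_zero.mp hac with h | h
      · exact absurd h ha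
      · exact h
    have had : a * d ≠ 0 := fun h => hdet (by rw [hc]; linear_combination h)
    have hd : d ≠ 0 := right_ne_zero_of_mul had
    have hb : b = 0 := by
      rcases mul_eq_zero.mp hbd with h | h
      · exact h
      · exact absurd h hd
    subst hb; subst hc
    refine Or.inl ⟨rfl, rfl, ha, hd, ?_⟩
    have key : (a * d) * (μ - γ) = 0 := by
      linear_combination μ * h1 + (γ * a * d) * hinv
    rcases mul_eq_zero.mp key with h | h
    · exact absurd h had
    · linear_combination h
end

section
/- For p, q ∈ k^× and λ ∈ k^× with λ = μ: if the 2×2 quantum matrix algebras M_{λ,p} and M_{λ,q} are isomorphic as graded k-algebras, then q = p or q = λ^{-1} p^{-1}. -/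
open scoped BigOperators

/-- Defining relations of the 2×2 multiparameter quantum matrix algebra
`M_{λ,p}`, on generators `x 0 = X₁₁`, `x 1 = X₁₂`, `x 2 = X₂₁`, `x 3 = X₂₂`:
`X₁₂X₁₁ = p X₁₁X₁₂`, `X₂₁X₁₁ = λp X₁₁X₂₁`, `X₂₂X₁₂ = λp X₁₂X₂₂`,
`X₂₂X₂₁ = p X₂₁X₂₂`, `X₂₁X₁₂ = λp² X₁₂X₂₁`,
`X₂₂X₁₁ = X₁₁X₂₂ + (λ−1)p X₁₂X₂₁`. -/
inductive QMRel (k : Type*) [Field k] (lam p : k) :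
    FreeAlgebra k (Fin 4) → FreeAlgebra k (Fin 4) → Prop
  | r21 : QMRel k lam p (FreeAlgebra.ι k (1 : Fin 4) * FreeAlgebra.ι k (0 : Fin 4))
      (p • (FreeAlgebra.ι k (0 : Fin 4) * FreeAlgebra.ι k (1 : Fin 4)))
  | r31 : QMRel k lam p (FreeAlgebra.ι k (2 : Fin 4) * FreeAlgebra.ι k (0 : Fin 4))
      ((lam * p) • (FreeAlgebra.ι k (0 : Fin 4) * FreeAlgebra.ι k (2 : Fin 4)))
  | r42 : QMRel k lam p (FreeAlgebra.ι k (3 : Fin 4) * FreeAlgebra.ι k (1 : Fin 4))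
      ((lam * p) • (FreeAlgebra.ι k (1 : Fin 4) * FreeAlgebra.ι k (3 : Fin 4)))
  | r43 : QMRel k lam p (FreeAlgebra.ι k (3 : Fin 4) * FreeAlgebra.ι k (2 : Fin 4))
      (p • (FreeAlgebra.ι k (2 : Fin 4) * FreeAlgebra.ι k (3 : Fin 4)))
  | r32 : QMRel k lam p (FreeAlgebra.ι k (2 : Fin 4) * FreeAlgebra.ι k (1 : Fin 4))
      ((lam * p ^ 2) • (FreeAlgebra.ι k (1 : Fin 4) * FreeAlgebra.ι k (2 : Fin 4)))
  | r41 : QMRel k lam p (FreeAlgebra.ι k (3 : Fin 4) * FreeAlgebra.ι k (0 : Fin 4))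
      (FreeAlgebra.ι k (0 : Fin 4) * FreeAlgebra.ι k (3 : Fin 4) +
        ((lam - 1) * p) • (FreeAlgebra.ι k (1 : Fin 4) * FreeAlgebra.ι k (2 : Fin 4)))

/-- The 2×2 multiparameter quantum matrix algebra `M_{λ,p} = O_{λ,p}(M₂(k))`. -/
abbrev QMat (k : Type*) [Field k] (lam p : k) := RingQuot (QMRel k lam p)

/-- The generators of `M_{λ,p}`: `qmGen 0 = X₁₁`, `qmGen 1 = X₁₂`,
`qmGen 2 = X₂₁`, `qmGen 3 = X₂₂`. -/
noncomputable def qmGen (k : Type*) [Field k] (lam p : k) (i : Fin 4) :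
    QMat k lam p :=
  RingQuot.mkAlgHom k (QMRel k lam p) (FreeAlgebra.ι k i)

open scoped BigOperators

section QMhelpers

variable {k : Type*} [Field k]

/-- truncated left-regular representation space: index 0 = 1, 1..4 = generators,
5..14 = degree-2 monomials m00,m01,m02,m03,m11,m12,m13,m22,m23,m33. -/
def qT0 : (Fin 15 → k) →ₗ[k] (Fin 15 → k) where
  toFun v := fun i =>
    if i.val = 1 then v 0 else if i.val = 5 then v 1 else if i.val = 6 then v 2
    else if i.val = 7 then v 3 else if i.val = 8 then v 4 else 0
  map_add' v w := by funext i; simp only [Pi.add_apply]; split_ifs <;> ring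
  map_smul' c v := by funext i; simp only [Pi.smul_apply, smul_eq_mul, RingHom.id_apply]
                      split_ifs <;> ring

def qT1 (q : k) : (Fin 15 → k) →ₗ[k] (Fin 15 → k) where
  toFun v := fun i =>
    if i.val = 2 then v 0 else if i.val = 6 then q * v 1 else if i.val = 9 then v 2
    else if i.val = 10 then v 3 else if i.val = 11 then v 4 else 0
  map_add' v w := by funext i; simp only [Pi.add_apply]; split_ifs <;> ring
  map_smul' c v := by funext i; simp only [Pi.smul_apply, smul_eq_mul, RingHom.id_apply]
                      split_ifs <;> ring

def qT2 (lam q : k) : (Fin 15 → k) →ₗ[k] (Fin 15 → k) where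
  toFun v := fun i =>
    if i.val = 3 then v 0 else if i.val = 7 then lam * q * v 1
    else if i.val = 10 then lam * q ^ 2 * v 2
    else if i.val = 12 then v 3 else if i.val = 13 then v 4 else 0
  map_add' v w := by funext i; simp only [Pi.add_apply]; split_ifs <;> ring
  map_smul' c v := by funext i; simp only [Pi.smul_apply, smul_eq_mul, RingHom.id_apply]
                      split_ifs <;> ring

def qT3 (lam q : k) : (Fin 15 → k) →ₗ[k] (Fin 15 → k) where
  toFun v := fun i =>
    if i.val = 4 then v 0 else if i.val = 8 then v 1
    else if i.val = 10 then (lam - 1) * q * v 1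
    else if i.val = 11 then lam * q * v 2 else if i.val = 13 then q * v 3
    else if i.val = 14 then v 4 else 0
  map_add' v w := by funext i; simp only [Pi.add_apply]; split_ifs <;> ring
  map_smul' c v := by funext i; simp only [Pi.smul_apply, smul_eq_mul, RingHom.id_apply]
                      split_ifs <;> ring

def qTgen (lam q : k) : Fin 4 → Module.End k (Fin 15 → k) :=
  ![qT0, qT1 q, qT2 lam q, qT3 lam q]

lemma qTrel21 (lam q : k) : qTgen lam q 1 * qTgen lam q 0
    = q • (qTgen lam q 0 * qTgen lam q 1) := by
  apply LinearMap.ext; intro v; funext i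
  fin_cases i <;>
    simp (config := { decide := true }) [qTgen, qT0, qT1, Module.End.mul_apply,
      LinearMap.smul_apply, LinearMap.coe_mk, AddHom.coe_mk]

lemma qTrel31 (lam q : k) : qTgen lam q 2 * qTgen lam q 0
    = (lam * q) • (qTgen lam q 0 * qTgen lam q 2) := by
  apply LinearMap.ext; intro v; funext i
  fin_cases i <;>
    simp (config := { decide := true }) [qTgen, qT0, qT2, Module.End.mul_apply,
      LinearMap.smul_apply, LinearMap.coe_mk, AddHom.coe_mk] <;> ring

lemma qTrel42 (lam q : k) : qTgen lam q 3 * qTgen lam q 1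
    = (lam * q) • (qTgen lam q 1 * qTgen lam q 3) := by
  apply LinearMap.ext; intro v; funext i
  fin_cases i <;>
    simp (config := { decide := true }) [qTgen, qT1, qT3, Module.End.mul_apply,
      LinearMap.smul_apply, LinearMap.coe_mk, AddHom.coe_mk] <;> ring

lemma qTrel43 (lam q : k) : qTgen lam q 3 * qTgen lam q 2
    = q • (qTgen lam q 2 * qTgen lam q 3) := by
  apply LinearMap.ext; intro v; funext i
  fin_cases i <;>
    simp (config := { decide := true }) [qTgen, qT2, qT3, Module.End.mul_apply,
      LinearMap.smul_apply, LinearMap.coe_mk, AddHom.coe_mk] <;> ring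

lemma qTrel32 (lam q : k) : qTgen lam q 2 * qTgen lam q 1
    = (lam * q ^ 2) • (qTgen lam q 1 * qTgen lam q 2) := by
  apply LinearMap.ext; intro v; funext i
  fin_cases i <;>
    simp (config := { decide := true }) [qTgen, qT1, qT2, Module.End.mul_apply,
      LinearMap.smul_apply, LinearMap.coe_mk, AddHom.coe_mk] <;> ring

lemma qTrel41 (lam q : k) : qTgen lam q 3 * qTgen lam q 0
    = qTgen lam q 0 * qTgen lam q 3
      + ((lam - 1) * q) • (qTgen lam q 1 * qTgen lam q 2) := by
  apply LinearMap.ext; intro v; funext i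
  fin_cases i <;>
    simp (config := { decide := true }) [qTgen, qT0, qT1, qT2, qT3, Module.End.mul_apply,
      LinearMap.smul_apply, LinearMap.add_apply, Pi.add_apply,
      LinearMap.coe_mk, AddHom.coe_mk] <;> ring

end QMhelpers
section QMrep

variable {k : Type*} [Field k]

noncomputable def qRep (lam q : k) : QMat k lam q →ₐ[k] Module.End k (Fin 15 → k) :=
  RingQuot.liftAlgHom k ⟨FreeAlgebra.lift k (qTgen lam q), by
    intro x y h
    induction h with
    | r21 => simp only [map_mul, map_smul, FreeAlgebra.lift_ι_apply]; exact qTrel21 lam q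
    | r31 => simp only [map_mul, map_smul, FreeAlgebra.lift_ι_apply]; exact qTrel31 lam q
    | r42 => simp only [map_mul, map_smul, FreeAlgebra.lift_ι_apply]; exact qTrel42 lam q
    | r43 => simp only [map_mul, map_smul, FreeAlgebra.lift_ι_apply]; exact qTrel43 lam q
    | r32 => simp only [map_mul, map_smul, FreeAlgebra.lift_ι_apply]; exact qTrel32 lam q
    | r41 => simp only [map_mul, map_smul, map_add, FreeAlgebra.lift_ι_apply]
             exact qTrel41 lam q⟩

lemma qRep_gen (lam q : k) (j : Fin 4) :
    qRep lam q (qmGen k lam q j) = qTgen lam q j := by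
  rw [qmGen, qRep, RingQuot.liftAlgHom_mkAlgHom_apply, FreeAlgebra.lift_ι_apply]

def qe0 : Fin 15 → k := fun i => if i.val = 0 then 1 else 0

def Efun (lam q : k) (b c : Fin 4 → k) : Fin 15 → k := fun i =>
  if i.val = 5 then b 0 * c 0
  else if i.val = 6 then b 0 * c 1 + q * (b 1 * c 0)
  else if i.val = 7 then b 0 * c 2 + lam * q * (b 2 * c 0)
  else if i.val = 8 then b 0 * c 3 + b 3 * c 0
  else if i.val = 9 then b 1 * c 1
  else if i.val = 10 then b 1 * c 2 + lam * q ^ 2 * (b 2 * c 1) + (lam - 1) * q * (b 3 * c 0)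
  else if i.val = 11 then b 1 * c 3 + lam * q * (b 3 * c 1)
  else if i.val = 12 then b 2 * c 2
  else if i.val = 13 then b 2 * c 3 + q * (b 3 * c 2)
  else if i.val = 14 then b 3 * c 3
  else 0

lemma qsingle (lam q : k) (b : Fin 4 → k) :
    (∑ j, b j • qTgen lam q j) (qe0 (k := k))
      = (fun i => if i.val = 1 then b 0 else if i.val = 2 then b 1
          else if i.val = 3 then b 2 else if i.val = 4 then b 3 else 0) := by
  funext i
  fin_cases i <;>
    simp (config := { decide := true }) [Fin.sum_univ_four, qTgen, qT0, qT1, qT2, qT3,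
      qe0, LinearMap.add_apply, LinearMap.smul_apply,
      Pi.add_apply, Pi.smul_apply, smul_eq_mul]

set_option maxHeartbeats 1600000 in
lemma qpair (lam q : k) (b c : Fin 4 → k) :
    ((∑ j, b j • qTgen lam q j) * (∑ j, c j • qTgen lam q j)) (qe0 (k := k))
      = Efun lam q b c := by
  rw [Module.End.mul_apply, qsingle]
  funext i
  fin_cases i <;>
    simp (config := { decide := true }) [Fin.sum_univ_four, qTgen, qT0, qT1, qT2, qT3,
      Efun, LinearMap.add_apply, LinearMap.smul_apply,
      Pi.add_apply, Pi.smul_apply, smul_eq_mul] <;> ring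

lemma det_col_smul_col (A : Matrix (Fin 4) (Fin 4) k) {j j' : Fin 4} (h : j ≠ j') (s : k)
    (hs : ∀ i, A i j' = s * A i j) : A.det = 0 := by
  have hA : A = A.updateCol j' (s • fun i => A i j) := by
    ext i c
    by_cases hc : c = j'
    · subst hc; simp [Matrix.updateCol_apply, hs i]
    · simp [Matrix.updateCol_apply, hc]
  rw [hA, Matrix.det_updateCol_smul, Matrix.det_updateCol_eq_zero h, mul_zero]

lemma det_two_cols (A : Matrix (Fin 4) (Fin 4) k) {j j' r : Fin 4} (hjj : j ≠ j')
    (hj : ∀ i, i ≠ r → A i j = 0) (hj' : ∀ i, i ≠ r → A i j' = 0) (hr : A r j ≠ 0) :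
    A.det = 0 := by
  refine det_col_smul_col A hjj (A r j' / A r j) (fun i => ?_)
  by_cases hi : i = r
  · subst hi; field_simp
  · simp [hj i hi, hj' i hi]

end QMrep
section QMrows

variable {k : Type*} [Field k]

lemma qmat_rows (lam p q : k)
    (Φ : QMat k lam p ≃ₐ[k] QMat k lam q) (a : Fin 4 → Fin 4 → k)
    (hΦ : ∀ i, Φ (qmGen k lam p i) = ∑ j, a i j • qmGen k lam q j) :
    IsUnit (Matrix.of a) := by
  rw [← Matrix.linearIndependent_rows_iff_isUnit]
  rw [Fintype.linearIndependent_iff]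
  intro g hg
  have hcoef : ∀ j, ∑ i, g i * a i j = 0 := by
    intro j
    have := congrFun hg j
    simpa [Finset.sum_apply] using this
  have hX : Φ (∑ i, g i • qmGen k lam p i) = 0 := by
    rw [map_sum]
    simp only [map_smul, hΦ, Finset.smul_sum, smul_smul]
    rw [Finset.sum_comm]
    refine Finset.sum_eq_zero fun j _ => ?_
    rw [← Finset.sum_smul, hcoef j, zero_smul]
  have hXz : (∑ i, g i • qmGen k lam p i) = 0 := by
    apply Φ.injective; rw [hX, map_zero]
  have h5 := congrArg (qRep lam p) hXz
  simp only [map_sum, map_smul, map_zero] at h5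
  simp only [qRep_gen] at h5
  have h6 := congrArg (fun f : Module.End k (Fin 15 → k) => f (qe0 (k := k))) h5
  simp only [qsingle, LinearMap.zero_apply] at h6
  intro i
  fin_cases i
  · simpa using congrFun h6 1
  · simpa using congrFun h6 2
  · simpa using congrFun h6 3
  · simpa using congrFun h6 4

end QMrows
section QMcore

variable {k : Type*} [Field k]

lemma qm_suppT1 {lam p x0 x1 x2 x3 : k} (hp1 : p ≠ 1) (hlp1 : lam * p ≠ 1)
    (h10 : x1 * x0 = p * (x0 * x1)) (h31 : x3 * x1 = lam * p * (x1 * x3))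
    (h12 : x1 * x2 = 0) (hx1 : x1 ≠ 0) : x0 = 0 ∧ x2 = 0 ∧ x3 = 0 := by
  refine ⟨?_, (mul_eq_zero.mp h12).resolve_left hx1, ?_⟩
  · have h : x0 * (x1 * (1 - p)) = 0 := by linear_combination h10
    exact (mul_eq_zero.mp h).resolve_right
      (mul_ne_zero hx1 (sub_ne_zero.mpr (Ne.symm hp1)))
  · have h : x3 * (x1 * (1 - lam * p)) = 0 := by linear_combination h31
    exact (mul_eq_zero.mp h).resolve_right
      (mul_ne_zero hx1 (sub_ne_zero.mpr (Ne.symm hlp1)))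

lemma qm_suppT2 {lam p x0 x1 x2 x3 : k} (hp1 : p ≠ 1) (hlp1 : lam * p ≠ 1)
    (h20 : x2 * x0 = lam * p * (x0 * x2)) (h32 : x3 * x2 = p * (x2 * x3))
    (h12 : x1 * x2 = 0) (hx2 : x2 ≠ 0) : x0 = 0 ∧ x1 = 0 ∧ x3 = 0 := by
  refine ⟨?_, (mul_eq_zero.mp h12).resolve_right hx2, ?_⟩
  · have h : x0 * (x2 * (1 - lam * p)) = 0 := by linear_combination h20
    exact (mul_eq_zero.mp h).resolve_right
      (mul_ne_zero hx2 (sub_ne_zero.mpr (Ne.symm hlp1)))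
  · have h : x3 * (x2 * (1 - p)) = 0 := by linear_combination h32
    exact (mul_eq_zero.mp h).resolve_right
      (mul_ne_zero hx2 (sub_ne_zero.mpr (Ne.symm hp1)))

set_option maxHeartbeats 3000000 in
lemma qmat_core (lam p q : k) (hlam : lam ^ 2 ≠ 1) (hp : p ≠ 0) (hq : q ≠ 0)
    (hp1 : p ≠ 1) (hlp1 : lam * p ≠ 1) (hqp : q ≠ p) (hlpq : lam * p * q ≠ 1)
    (Φ : QMat k lam p ≃ₐ[k] QMat k lam q) (a : Fin 4 → Fin 4 → k)
    (hΦ : ∀ i, Φ (qmGen k lam p i) = ∑ j, a i j • qmGen k lam q j) : False := by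
  have hl1 : lam ≠ 1 := fun h => hlam (by rw [h]; norm_num)
  have hqp' : q - p ≠ 0 := sub_ne_zero.mpr hqp
  have hlpq' : (1 : k) - lam * p * q ≠ 0 := sub_ne_zero.mpr (Ne.symm hlpq)
  have h1p : (1 : k) - p ≠ 0 := sub_ne_zero.mpr (Ne.symm hp1)
  have h1lp : (1 : k) - lam * p ≠ 0 := sub_ne_zero.mpr (Ne.symm hlp1)
  have hdet : (Matrix.of a).det ≠ 0 :=
    ((Matrix.isUnit_iff_isUnit_det _).mp (qmat_rows lam p q Φ a hΦ)).ne_zero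
  have hgen : ∀ i, qRep lam q (Φ (qmGen k lam p i)) = ∑ j, a i j • qTgen lam q j := by
    intro i; rw [hΦ i, map_sum]; simp only [map_smul, qRep_gen]
  have hrel : ∀ {i j : Fin 4} {c : k},
      (qmGen k lam p i * qmGen k lam p j = c • (qmGen k lam p j * qmGen k lam p i)) →
      ∀ n : Fin 15, Efun lam q (a i) (a j) n = c * Efun lam q (a j) (a i) n := by
    intro i j c hrel0 n
    have h3 := congrArg (fun z => qRep lam q (Φ z)) hrel0
    simp only [map_mul, map_smul, hgen] at h3
    have h4 := congrArg (fun f : Module.End k (Fin 15 → k) => f (qe0 (k := k))) h3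
    simp only [LinearMap.smul_apply, qpair] at h4
    simpa using congrFun h4 n
  have e10 := hrel (c := p) (by
    simpa only [map_mul, map_smul, qmGen] using
      RingQuot.mkAlgHom_rel k (QMRel.r21 (k := k) (lam := lam) (p := p)))
  have e20 := hrel (c := lam * p) (by
    simpa only [map_mul, map_smul, qmGen] using
      RingQuot.mkAlgHom_rel k (QMRel.r31 (k := k) (lam := lam) (p := p)))
  have e31 := hrel (c := lam * p) (by
    simpa only [map_mul, map_smul, qmGen] using
      RingQuot.mkAlgHom_rel k (QMRel.r42 (k := k) (lam := lam) (p := p)))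
  have e32 := hrel (c := p) (by
    simpa only [map_mul, map_smul, qmGen] using
      RingQuot.mkAlgHom_rel k (QMRel.r43 (k := k) (lam := lam) (p := p)))
  have e41 : ∀ n : Fin 15, Efun lam q (a 3) (a 0) n
      = Efun lam q (a 0) (a 3) n + ((lam - 1) * p) * Efun lam q (a 1) (a 2) n := by
    have hrel0 : qmGen k lam p 3 * qmGen k lam p 0
        = qmGen k lam p 0 * qmGen k lam p 3
          + ((lam - 1) * p) • (qmGen k lam p 1 * qmGen k lam p 2) := by
      simpa only [map_mul, map_smul, map_add, qmGen] using
        RingQuot.mkAlgHom_rel k (QMRel.r41 (k := k) (lam := lam) (p := p))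
    intro n
    have h3 := congrArg (fun z => qRep lam q (Φ z)) hrel0
    simp only [map_mul, map_smul, map_add, hgen] at h3
    have h4 := congrArg (fun f : Module.End k (Fin 15 → k) => f (qe0 (k := k))) h3
    simp only [LinearMap.smul_apply, LinearMap.add_apply, qpair] at h4
    simpa using congrFun h4 n
  -- scalar equations
  have eSA10 : a 1 0 * a 0 0 = p * (a 0 0 * a 1 0) := by
    have h := e10 5; simp (config := { decide := true }) [Efun] at h; linear_combination h
  have eSA20 : a 2 0 * a 0 0 = lam * p * (a 0 0 * a 2 0) := by
    have h := e20 5; simp (config := { decide := true }) [Efun] at h; linear_combination h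
  have eSA31 : a 3 0 * a 1 0 = lam * p * (a 1 0 * a 3 0) := by
    have h := e31 5; simp (config := { decide := true }) [Efun] at h; linear_combination h
  have eSA32 : a 3 0 * a 2 0 = p * (a 2 0 * a 3 0) := by
    have h := e32 5; simp (config := { decide := true }) [Efun] at h; linear_combination h
  have eSB10 : a 1 1 * a 0 1 = p * (a 0 1 * a 1 1) := by
    have h := e10 9; simp (config := { decide := true }) [Efun] at h; linear_combination h
  have eSB20 : a 2 1 * a 0 1 = lam * p * (a 0 1 * a 2 1) := by
    have h := e20 9; simp (config := { decide := true }) [Efun] at h; linear_combination h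
  have eSB31 : a 3 1 * a 1 1 = lam * p * (a 1 1 * a 3 1) := by
    have h := e31 9; simp (config := { decide := true }) [Efun] at h; linear_combination h
  have eSB32 : a 3 1 * a 2 1 = p * (a 2 1 * a 3 1) := by
    have h := e32 9; simp (config := { decide := true }) [Efun] at h; linear_combination h
  have eSG10 : a 1 2 * a 0 2 = p * (a 0 2 * a 1 2) := by
    have h := e10 12; simp (config := { decide := true }) [Efun] at h; linear_combination h
  have eSG31 : a 3 2 * a 1 2 = lam * p * (a 1 2 * a 3 2) := by
    have h := e31 12; simp (config := { decide := true }) [Efun] at h; linear_combination h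
  have eSD10 : a 1 3 * a 0 3 = p * (a 0 3 * a 1 3) := by
    have h := e10 14; simp (config := { decide := true }) [Efun] at h; linear_combination h
  have eSD20 : a 2 3 * a 0 3 = lam * p * (a 0 3 * a 2 3) := by
    have h := e20 14; simp (config := { decide := true }) [Efun] at h; linear_combination h
  have eSD31 : a 3 3 * a 1 3 = lam * p * (a 1 3 * a 3 3) := by
    have h := e31 14; simp (config := { decide := true }) [Efun] at h; linear_combination h
  have eSD32 : a 3 3 * a 2 3 = p * (a 2 3 * a 3 3) := by
    have h := e32 14; simp (config := { decide := true }) [Efun] at h; linear_combination h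
  have eAB10 : a 1 0 * a 0 1 + q * (a 1 1 * a 0 0)
      = p * (a 0 0 * a 1 1 + q * (a 0 1 * a 1 0)) := by
    have h := e10 6; simp (config := { decide := true }) [Efun] at h; linear_combination h
  have eAB20 : a 2 0 * a 0 1 + q * (a 2 1 * a 0 0)
      = lam * p * (a 0 0 * a 2 1 + q * (a 0 1 * a 2 0)) := by
    have h := e20 6; simp (config := { decide := true }) [Efun] at h; linear_combination h
  have eAB31 : a 3 0 * a 1 1 + q * (a 3 1 * a 1 0)
      = lam * p * (a 1 0 * a 3 1 + q * (a 1 1 * a 3 0)) := by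
    have h := e31 6; simp (config := { decide := true }) [Efun] at h; linear_combination h
  have eAB32 : a 3 0 * a 2 1 + q * (a 3 1 * a 2 0)
      = p * (a 2 0 * a 3 1 + q * (a 2 1 * a 3 0)) := by
    have h := e32 6; simp (config := { decide := true }) [Efun] at h; linear_combination h
  have eAG10 : a 1 0 * a 0 2 + lam * q * (a 1 2 * a 0 0)
      = p * (a 0 0 * a 1 2 + lam * q * (a 0 2 * a 1 0)) := by
    have h := e10 7; simp (config := { decide := true }) [Efun] at h; linear_combination h
  have eAG31 : a 3 0 * a 1 2 + lam * q * (a 3 2 * a 1 0)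
      = lam * p * (a 1 0 * a 3 2 + lam * q * (a 1 2 * a 3 0)) := by
    have h := e31 7; simp (config := { decide := true }) [Efun] at h; linear_combination h
  have eAD10 : a 1 0 * a 0 3 + a 1 3 * a 0 0
      = p * (a 0 0 * a 1 3 + a 0 3 * a 1 0) := by
    have h := e10 8; simp (config := { decide := true }) [Efun] at h; linear_combination h
  have eAD20 : a 2 0 * a 0 3 + a 2 3 * a 0 0
      = lam * p * (a 0 0 * a 2 3 + a 0 3 * a 2 0) := by
    have h := e20 8; simp (config := { decide := true }) [Efun] at h; linear_combination h
  have eAD31 : a 3 0 * a 1 3 + a 3 3 * a 1 0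
      = lam * p * (a 1 0 * a 3 3 + a 1 3 * a 3 0) := by
    have h := e31 8; simp (config := { decide := true }) [Efun] at h; linear_combination h
  have eAD32 : a 3 0 * a 2 3 + a 3 3 * a 2 0
      = p * (a 2 0 * a 3 3 + a 2 3 * a 3 0) := by
    have h := e32 8; simp (config := { decide := true }) [Efun] at h; linear_combination h
  have hlp0 : (lam - 1) * p ≠ 0 := mul_ne_zero (sub_ne_zero.mpr hl1) hp
  have eG1 : a 1 0 * a 2 0 = 0 := by
    have h := e41 5; simp (config := { decide := true }) [Efun] at h
    have h2 : (lam - 1) * p * (a 1 0 * a 2 0) = 0 := by linear_combination -h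
    exact (mul_eq_zero.mp h2).resolve_left hlp0
  have eH4 : a 1 1 * a 2 1 = 0 := by
    have h := e41 9; simp (config := { decide := true }) [Efun] at h
    have h2 : (lam - 1) * p * (a 1 1 * a 2 1) = 0 := by linear_combination -h
    exact (mul_eq_zero.mp h2).resolve_left hlp0
  have eG4 : a 1 2 * a 2 2 = 0 := by
    have h := e41 12; simp (config := { decide := true }) [Efun] at h
    have h2 : (lam - 1) * p * (a 1 2 * a 2 2) = 0 := by linear_combination -h
    exact (mul_eq_zero.mp h2).resolve_left hlp0
  have eG6 : a 1 3 * a 2 3 = 0 := by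
    have h := e41 14; simp (config := { decide := true }) [Efun] at h
    have h2 : (lam - 1) * p * (a 1 3 * a 2 3) = 0 := by linear_combination -h
    exact (mul_eq_zero.mp h2).resolve_left hlp0
  have eG3 : a 1 0 * a 2 3 + a 1 3 * a 2 0 = 0 := by
    have h := e41 8; simp (config := { decide := true }) [Efun] at h
    have h2 : (lam - 1) * p * (a 1 0 * a 2 3 + a 1 3 * a 2 0) = 0 := by linear_combination -h
    exact (mul_eq_zero.mp h2).resolve_left hlp0
  clear e10 e20 e31 e32 e41 hrel hgen
  -- CASE ANALYSIS on the carrier of row 1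
  by_cases hA1 : a 1 0 = 0
  · by_cases hD1 : a 1 3 = 0
    · by_cases hB1 : a 1 1 = 0
      · by_cases hC1 : a 1 2 = 0
        · -- row 1 is zero
          refine hdet (Matrix.det_eq_zero_of_row_eq_zero 1 (fun j => ?_))
          fin_cases j
          exacts [hA1, hB1, hC1, hD1]
        · -- ξ = γ
          obtain ⟨sC0, sC2, sC3⟩ := qm_suppT1 hp1 hlp1 eSG10 eSG31 eG4 hC1
          have fA0 : a 0 0 * (lam * q - p) = 0 := by
            have h : (a 0 0 * (lam * q - p)) * a 1 2 = 0 := by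
              linear_combination eAG10 + (p * lam * q - 1) * a 0 2 * hA1
            exact (mul_eq_zero.mp h).resolve_right hC1
          have fA3 : a 3 0 * (1 - lam ^ 2 * p * q) = 0 := by
            have h : (a 3 0 * (1 - lam ^ 2 * p * q)) * a 1 2 = 0 := by
              linear_combination eAG31 + (lam * p - lam * q) * a 1 0 * sC3
            exact (mul_eq_zero.mp h).resolve_right hC1
          by_cases hB2 : a 2 1 = 0
          · by_cases hD2 : a 2 3 = 0
            · by_cases hA2 : a 2 0 = 0
              · -- row 2 is zero
                refine hdet (Matrix.det_eq_zero_of_row_eq_zero 2 (fun j => ?_))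
                fin_cases j
                exacts [hA2, hB2, sC2, hD2]
              · -- η = α : column β dies
                have cB0 : a 0 1 = 0 := by
                  have h : (a 0 1 * (1 - lam * p * q)) * a 2 0 = 0 := by
                    linear_combination eAB20 + (lam * p - q) * a 0 0 * hB2
                  exact (mul_eq_zero.mp
                    ((mul_eq_zero.mp h).resolve_right hA2)).resolve_right hlpq'
                have cB3 : a 3 1 = 0 := by
                  have h : (a 3 1 * (q - p)) * a 2 0 = 0 := by
                    linear_combination eAB32 + (p * q - 1) * a 3 0 * hB2
                  exact (mul_eq_zero.mp
                    ((mul_eq_zero.mp h).resolve_right hA2)).resolve_right hqp'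
                refine hdet (Matrix.det_eq_zero_of_column_eq_zero 1 (fun i => ?_))
                fin_cases i
                exacts [cB0, hB1, hB2, cB3]
            · -- η = δ : column α dies or two T2 columns
              obtain ⟨sD0', sD1', sD3'⟩ := qm_suppT2 hp1 hlp1 eSD20 eSD32 eG6 hD2
              have cA0 : a 0 0 = 0 := by
                have h : (a 0 0 * (1 - lam * p)) * a 2 3 = 0 := by
                  linear_combination eAD20 + (lam * p - 1) * a 2 0 * sD0'
                exact (mul_eq_zero.mp
                  ((mul_eq_zero.mp h).resolve_right hD2)).resolve_right h1lp
              have cA3 : a 3 0 = 0 := by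
                have h : (a 3 0 * (1 - p)) * a 2 3 = 0 := by
                  linear_combination eAD32 + (p - 1) * a 2 0 * sD3'
                exact (mul_eq_zero.mp
                  ((mul_eq_zero.mp h).resolve_right hD2)).resolve_right h1p
              by_cases hA2 : a 2 0 = 0
              · refine hdet (Matrix.det_eq_zero_of_column_eq_zero 0 (fun i => ?_))
                fin_cases i
                exacts [cA0, hA1, hA2, cA3]
              · refine hdet (det_two_cols (Matrix.of a)
                  (show (0 : Fin 4) ≠ 3 by decide) (r := 2)
                  (fun i hi => ?_) (fun i hi => ?_) hA2)
                · fin_cases i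
                  exacts [cA0, hA1, absurd rfl hi, cA3]
                · fin_cases i
                  exacts [sD0', sD1', absurd rfl hi, sD3']
          · -- η = β : column α dies or two T2 columns
            obtain ⟨sB0', sB1', sB3'⟩ := qm_suppT2 hp1 hlp1 eSB20 eSB32 eH4 hB2
            have cA0 : a 0 0 = 0 := by
              have h : (a 0 0 * (q - lam * p)) * a 2 1 = 0 := by
                linear_combination eAB20 + (lam * p * q - 1) * a 2 0 * sB0'
              have h2 := (mul_eq_zero.mp h).resolve_right hB2
              by_contra hA0ne
              have f1 : lam * q - p = 0 := (mul_eq_zero.mp fA0).resolve_left hA0ne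
              have f2 : q - lam * p = 0 := (mul_eq_zero.mp h2).resolve_left hA0ne
              have f3 : q * (1 - lam ^ 2) = 0 := by linear_combination f2 - lam * f1
              rcases mul_eq_zero.mp f3 with h' | h'
              · exact hq h'
              · exact hlam (by linear_combination -h')
            have cA3 : a 3 0 = 0 := by
              have h : (a 3 0 * (1 - p * q)) * a 2 1 = 0 := by
                linear_combination eAB32 + (p - q) * a 2 0 * sB3'
              have h2 := (mul_eq_zero.mp h).resolve_right hB2
              by_contra hA3ne
              have f1 : 1 - p * q = 0 := (mul_eq_zero.mp h2).resolve_left hA3ne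
              have f2 : (1 : k) - lam ^ 2 * p * q = 0 :=
                (mul_eq_zero.mp fA3).resolve_left hA3ne
              have f3 : p * q * (lam ^ 2 - 1) = 0 := by linear_combination f1 - f2
              rcases mul_eq_zero.mp f3 with h' | h'
              · rcases mul_eq_zero.mp h' with h'' | h''
                exacts [hp h'', hq h'']
              · exact hlam (by linear_combination h')
            by_cases hA2 : a 2 0 = 0
            · refine hdet (Matrix.det_eq_zero_of_column_eq_zero 0 (fun i => ?_))
              fin_cases i
              exacts [cA0, hA1, hA2, cA3]
            · refine hdet (det_two_cols (Matrix.of a)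
                (show (0 : Fin 4) ≠ 1 by decide) (r := 2)
                (fun i hi => ?_) (fun i hi => ?_) hA2)
              · fin_cases i
                exacts [cA0, hA1, absurd rfl hi, cA3]
              · fin_cases i
                exacts [sB0', sB1', absurd rfl hi, sB3']
      · -- ξ = β
        obtain ⟨sB0, sB2, sB3⟩ := qm_suppT1 hp1 hlp1 eSB10 eSB31 eH4 hB1
        have cA0 : a 0 0 = 0 := by
          have h : (a 0 0 * (q - p)) * a 1 1 = 0 := by
            linear_combination eAB10 + (p * q - 1) * a 0 1 * hA1
          exact (mul_eq_zero.mp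
            ((mul_eq_zero.mp h).resolve_right hB1)).resolve_right hqp'
        have cA3 : a 3 0 = 0 := by
          have h : (a 3 0 * (1 - lam * p * q)) * a 1 1 = 0 := by
            linear_combination eAB31 + (lam * p - q) * a 3 1 * hA1
          exact (mul_eq_zero.mp
            ((mul_eq_zero.mp h).resolve_right hB1)).resolve_right hlpq'
        by_cases hA2 : a 2 0 = 0
        · refine hdet (Matrix.det_eq_zero_of_column_eq_zero 0 (fun i => ?_))
          fin_cases i
          exacts [cA0, hA1, hA2, cA3]
        · by_cases hD2 : a 2 3 = 0
          · have dD0 : a 0 3 = 0 := by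
              have h : (a 0 3 * (1 - lam * p)) * a 2 0 = 0 := by
                linear_combination eAD20 + (lam * p - 1) * a 0 0 * hD2
              exact (mul_eq_zero.mp
                ((mul_eq_zero.mp h).resolve_right hA2)).resolve_right h1lp
            have dD3 : a 3 3 = 0 := by
              have h : (a 3 3 * (1 - p)) * a 2 0 = 0 := by
                linear_combination eAD32 + (p - 1) * a 3 0 * hD2
              exact (mul_eq_zero.mp
                ((mul_eq_zero.mp h).resolve_right hA2)).resolve_right h1p
            refine hdet (Matrix.det_eq_zero_of_column_eq_zero 3 (fun i => ?_))
            fin_cases i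
            exacts [dD0, hD1, hD2, dD3]
          · obtain ⟨sD0', sD1', sD3'⟩ := qm_suppT2 hp1 hlp1 eSD20 eSD32 eG6 hD2
            refine hdet (det_two_cols (Matrix.of a)
              (show (0 : Fin 4) ≠ 3 by decide) (r := 2)
              (fun i hi => ?_) (fun i hi => ?_) hA2)
            · fin_cases i
              exacts [cA0, hA1, absurd rfl hi, cA3]
            · fin_cases i
              exacts [sD0', sD1', absurd rfl hi, sD3']
    · -- ξ = δ : column α dies
      obtain ⟨sD0, sD2, sD3⟩ := qm_suppT1 hp1 hlp1 eSD10 eSD31 eG6 hD1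
      have cA2 : a 2 0 = 0 := by
        have h : a 1 3 * a 2 0 = 0 := by linear_combination eG3 - a 2 3 * hA1
        exact (mul_eq_zero.mp h).resolve_left hD1
      have cA0 : a 0 0 = 0 := by
        have h : (a 0 0 * (1 - p)) * a 1 3 = 0 := by
          linear_combination eAD10 + (p - 1) * a 0 3 * hA1
        exact (mul_eq_zero.mp
          ((mul_eq_zero.mp h).resolve_right hD1)).resolve_right h1p
      have cA3 : a 3 0 = 0 := by
        have h : (a 3 0 * (1 - lam * p)) * a 1 3 = 0 := by
          linear_combination eAD31 + (lam * p - 1) * a 3 3 * hA1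
        exact (mul_eq_zero.mp
          ((mul_eq_zero.mp h).resolve_right hD1)).resolve_right h1lp
      refine hdet (Matrix.det_eq_zero_of_column_eq_zero 0 (fun i => ?_))
      fin_cases i
      exacts [cA0, hA1, cA2, cA3]
  · -- ξ = α : column δ dies or two T1 columns
    obtain ⟨sA0, sA2, sA3⟩ := qm_suppT1 hp1 hlp1 eSA10 eSA31 eG1 hA1
    have dD2 : a 2 3 = 0 := by
      have h : a 1 0 * a 2 3 = 0 := by linear_combination eG3 - a 1 3 * sA2
      exact (mul_eq_zero.mp h).resolve_left hA1
    by_cases hD1 : a 1 3 = 0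
    · have dD0 : a 0 3 = 0 := by
        have h : (a 0 3 * (1 - p)) * a 1 0 = 0 := by
          linear_combination eAD10 + (p - 1) * a 0 0 * hD1
        exact (mul_eq_zero.mp
          ((mul_eq_zero.mp h).resolve_right hA1)).resolve_right h1p
      have dD3 : a 3 3 = 0 := by
        have h : (a 3 3 * (1 - lam * p)) * a 1 0 = 0 := by
          linear_combination eAD31 + (lam * p - 1) * a 3 0 * hD1
        exact (mul_eq_zero.mp
          ((mul_eq_zero.mp h).resolve_right hA1)).resolve_right h1lp
      refine hdet (Matrix.det_eq_zero_of_column_eq_zero 3 (fun i => ?_))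
      fin_cases i
      exacts [dD0, hD1, dD2, dD3]
    · obtain ⟨sD0, sD2, sD3⟩ := qm_suppT1 hp1 hlp1 eSD10 eSD31 eG6 hD1
      refine hdet (det_two_cols (Matrix.of a)
        (show (0 : Fin 4) ≠ 3 by decide) (r := 1)
        (fun i hi => ?_) (fun i hi => ?_) hA1)
      · fin_cases i
        exacts [sA0, absurd rfl hi, sA2, sA3]
      · fin_cases i
        exacts [sD0, absurd rfl hi, sD2, sD3]

end QMcore
/-- If `M_{λ,p}` and `M_{λ,q}` are isomorphic as graded algebras (the images of
the generators are linear combinations of the generators), then `q = p` or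
`q = λ⁻¹ p⁻¹`. -/
theorem qmat_graded_iso_param {k : Type*} [Field k] (lam p q : k)
    (hlam : lam ^ 2 ≠ 1) (hp : p ≠ 0) (hq : q ≠ 0)
    (Φ : QMat k lam p ≃ₐ[k] QMat k lam q) (a : Fin 4 → Fin 4 → k)
    (hΦ : ∀ i, Φ (qmGen k lam p i) = ∑ j, a i j • qmGen k lam q j) :
    q = p ∨ q = lam⁻¹ * p⁻¹ := by
  by_contra hcon
  push_neg at hcon
  obtain ⟨h1, h2⟩ := hcon
  have hlpq : lam * p * q ≠ 1 := by
    intro h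
    have hlam0 : lam ≠ 0 := by
      rintro rfl; rw [zero_mul, zero_mul] at h; exact zero_ne_one h
    refine h2 ?_
    field_simp
    linear_combination h
  by_cases hc : p = 1 ∨ lam * p = 1
  · have hq1 : q ≠ 1 := by
      rcases hc with h | h
      · rintro rfl; exact h1 h.symm
      · rintro rfl; rw [mul_one] at hlpq; exact hlpq h
    have hlq1 : lam * q ≠ 1 := by
      rcases hc with h | h
      · intro hh; exact hlpq (by linear_combination p * hh + hh * 0 + h)
      · intro hh
        have hlam0 : lam ≠ 0 := by
          rintro rfl; rw [zero_mul] at h; exact zero_ne_one h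
        have h3 : lam * (q - p) = 0 := by linear_combination hh - h
        exact h1 (sub_eq_zero.mp ((mul_eq_zero.mp h3).resolve_left hlam0))
    have hU : IsUnit (Matrix.of a) := qmat_rows lam p q Φ a hΦ
    have hBA : (Matrix.of a)⁻¹ * Matrix.of a = 1 :=
      Matrix.nonsing_inv_mul _ ((Matrix.isUnit_iff_isUnit_det _).mp hU)
    have hsymm : ∀ j, Φ.symm (qmGen k lam q j)
        = ∑ i, (Matrix.of a)⁻¹ j i • qmGen k lam p i := by
      intro j
      apply Φ.injective
      rw [AlgEquiv.apply_symm_apply, map_sum]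
      simp only [map_smul, hΦ, Finset.smul_sum, smul_smul]
      rw [Finset.sum_comm]
      have hstep : ∀ l, (∑ i, ((Matrix.of a)⁻¹ j i * a i l) • qmGen k lam q l)
          = (((Matrix.of a)⁻¹ * Matrix.of a) j l) • qmGen k lam q l := by
        intro l
        rw [← Finset.sum_smul, Matrix.mul_apply]
        rfl
      simp only [hstep, hBA]
      simp [Matrix.one_apply]
    exact (qmat_core lam q p hlam hq hp hq1 hlq1 (Ne.symm h1)
      (fun hh => hlpq (by linear_combination hh)) Φ.symm
      (fun j i => (Matrix.of a)⁻¹ j i) hsymm).elim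
  · push_neg at hc
    exact (qmat_core lam p q hlam hp hq hc.1 hc.2 h1 hlpq Φ a hΦ).elim
end

section
/- In the quantum plane O_q(k^2) generated by x, y with xy = q yx, the algebras O_q(k^2) and O_{q'}(k^2) are isomorphic if and only if q' = q or q' = q^{-1}. -/
theorem AlgHom.eq_zero_or_eq_zero_of_mul_eq_smul_mul {k A B : Type*} [Field k] [Ring A]
    [Algebra k A] [CommRing B] [IsDomain B] [Algebra k B] (f : A →ₐ[k] B) {c : k} (hc : c ≠ 1)
    {u v : A} (huv : u * v = c • (v * u)) : f u = 0 ∨ f v = 0 := by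
  have h := congrArg f huv
  rw [map_mul, map_smul, map_mul, mul_comm (f v)] at h
  have h' : (1 - c) • (f u * f v) = 0 := by rw [sub_smul, one_smul, ← h, sub_self]
  exact mul_eq_zero.mp ((smul_eq_zero.mp h').resolve_left (sub_ne_zero.mpr hc.symm))

namespace QPlane

variable {k : Type*} [Field k]

section Generators

variable (q : k)

noncomputable def X : QPlane k q := RingQuot.mkAlgHom k (QPRel k q) (FreeAlgebra.ι k 0)

noncomputable def Y : QPlane k q := RingQuot.mkAlgHom k (QPRel k q) (FreeAlgebra.ι k 1)

theorem X_mul_Y : X q * Y q = q • (Y q * X q) := by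
  have := RingQuot.mkAlgHom_rel k (QPRel.rel (k := k) (q := q))
  rwa [map_mul, map_smul, map_mul] at this

theorem adjoin_X_Y : Algebra.adjoin k {X q, Y q} = ⊤ := by
  have hXY : RingQuot.mkAlgHom k (QPRel k q) '' Set.range (FreeAlgebra.ι k) = {X q, Y q} := by
    ext
    simp [Fin.exists_fin_two, X, Y, eq_comm]
  rw [← hXY, ← AlgHom.map_adjoin, FreeAlgebra.adjoin_range_ι, Algebra.map_top,
    AlgHom.range_eq_top]
  exact RingQuot.mkAlgHom_surjective k _

variable {q} {B : Type*} [Ring B] [Algebra k B]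

noncomputable def lift (u v : B) (h : u * v = q • (v * u)) : QPlane k q →ₐ[k] B :=
  RingQuot.liftAlgHom k ⟨FreeAlgebra.lift k ![u, v], by rintro _ _ ⟨⟩; simpa using h⟩

@[simp] theorem lift_X (u v : B) (h : u * v = q • (v * u)) : lift u v h (X q) = u := by
  simp [lift, X]

@[simp] theorem lift_Y (u v : B) (h : u * v = q • (v * u)) : lift u v h (Y q) = v := by
  simp [lift, Y]

@[ext] theorem algHom_ext {f g : QPlane k q →ₐ[k] B} (hX : f (X q) = g (X q))
    (hY : f (Y q) = g (Y q)) : f = g :=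
  RingQuot.ringQuot_ext' _ _ _ <| FreeAlgebra.hom_ext <| funext fun i => by
    fin_cases i
    exacts [hX, hY]

theorem Y_mul_X (hq : q ≠ 0) : Y q * X q = q⁻¹ • (X q * Y q) := by
  rw [X_mul_Y, smul_smul, inv_mul_cancel₀ hq, one_smul]

noncomputable def swapEquiv (hq : q ≠ 0) : QPlane k q ≃ₐ[k] QPlane k q⁻¹ :=
  .ofAlgHom (lift (Y q⁻¹) (X q⁻¹) (by rw [Y_mul_X (inv_ne_zero hq), inv_inv]))
    (lift (Y q) (X q) (Y_mul_X hq)) (algHom_ext (by simp) (by simp))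
    (algHom_ext (by simp) (by simp))

end Generators

section Monomials

variable (q : k)

theorem X_mul_Y_pow (j : ℕ) : X q * Y q ^ j = q ^ j • (Y q ^ j * X q) := by
  induction j with
  | zero => simp
  | succ j ih =>
    rw [pow_succ, ← mul_assoc, ih, smul_mul_assoc, mul_assoc, X_mul_Y, mul_smul_comm, smul_smul,
      ← mul_assoc, pow_succ]

theorem X_pow_mul_Y_pow (i j : ℕ) : X q ^ i * Y q ^ j = q ^ (i * j) • (Y q ^ j * X q ^ i) := by
  induction i with
  | zero => simp
  | succ i ih =>
    rw [pow_succ', mul_assoc, ih, mul_smul_comm, ← mul_assoc, X_mul_Y_pow, smul_mul_assoc,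
      smul_smul, mul_assoc, ← pow_succ', ← pow_add, add_one_mul, add_comm (i * j)]

/-- Ordered as `y ^ j * x ^ i` so that straightening with `x y = q y x` never divides by `q`. -/
noncomputable def monomial (p : ℕ × ℕ) : QPlane k q := Y q ^ p.2 * X q ^ p.1

theorem monomial_mul_monomial (p r : ℕ × ℕ) :
    monomial q p * monomial q r = q ^ (p.1 * r.2) • monomial q (p + r) := by
  simp only [monomial, Prod.fst_add, Prod.snd_add, pow_add]
  rw [mul_assoc, ← mul_assoc (X q ^ p.1), X_pow_mul_Y_pow, smul_mul_assoc, mul_smul_comm,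
    ← mul_assoc, ← mul_assoc, mul_assoc _ (X q ^ p.1)]

theorem monomial_zero : monomial q 0 = 1 := by simp [monomial]

theorem span_range_monomial : Submodule.span k (Set.range (monomial q)) = ⊤ := by
  set M := Submodule.span k (Set.range (monomial q))
  have mul_mem : ∀ a b, a ∈ M → b ∈ M → a * b ∈ M := by
    intro a b ha hb
    have hab := Submodule.mul_mem_mul ha hb
    rw [Submodule.span_mul_span] at hab
    refine Submodule.span_le.mpr ?_ hab
    rintro _ ⟨_, ⟨p, rfl⟩, _, ⟨r, rfl⟩, rfl⟩
    change monomial q p * monomial q r ∈ M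
    rw [monomial_mul_monomial]
    exact Submodule.smul_mem _ _ (Submodule.subset_span ⟨p + r, rfl⟩)
  have one_mem : (1 : QPlane k q) ∈ M := monomial_zero q ▸ Submodule.subset_span ⟨0, rfl⟩
  have hX : X q ∈ M := Submodule.subset_span ⟨(1, 0), by simp [monomial]⟩
  have hY : Y q ∈ M := Submodule.subset_span ⟨(0, 1), by simp [monomial]⟩
  have hle : ⊤ ≤ M.toSubalgebra one_mem mul_mem :=
    adjoin_X_Y q ▸ Algebra.adjoin_le (Set.pair_subset hX hY)
  exact eq_top_iff.mpr fun a _ => hle Algebra.mem_top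

end Monomials

section RegularRepresentation

variable (q : k)

/-- Left multiplication by `x` on the monomials: `x * y ^ j x ^ i = q ^ j • y ^ j x ^ (i + 1)`. -/
noncomputable def regX : Module.End k ((ℕ × ℕ) →₀ k) :=
  Finsupp.lsum k fun p => q ^ p.2 • Finsupp.lsingle (p.1 + 1, p.2)

noncomputable def regY : Module.End k ((ℕ × ℕ) →₀ k) :=
  Finsupp.lmapDomain k k fun p => (p.1, p.2 + 1)

@[simp] theorem regX_single (p : ℕ × ℕ) (c : k) :
    regX q (Finsupp.single p c) = q ^ p.2 • Finsupp.single (p.1 + 1, p.2) c := by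
  simp [regX]

@[simp] theorem regY_single (p : ℕ × ℕ) (c : k) :
    regY (Finsupp.single p c) = Finsupp.single (p.1, p.2 + 1) c := by
  simp [regY]

theorem regX_mul_regY : regX q * regY = q • (regY * regX q) := by
  refine Finsupp.lhom_ext fun p c => ?_
  simp only [Module.End.mul_apply, LinearMap.smul_apply, regX_single, regY_single, map_smul,
    smul_smul, pow_succ']

noncomputable def regularRep : QPlane k q →ₐ[k] Module.End k ((ℕ × ℕ) →₀ k) :=
  lift (regX q) regY (regX_mul_regY q)

theorem regX_pow_single (i n : ℕ) (c : k) :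
    (regX q ^ n) (Finsupp.single (i, 0) c) = Finsupp.single (i + n, 0) c := by
  induction n generalizing i with
  | zero => simp
  | succ n ih => rw [pow_succ, Module.End.mul_apply, regX_single, pow_zero, one_smul, ih,
      add_right_comm, add_assoc]

theorem regY_pow_single (p : ℕ × ℕ) (n : ℕ) (c : k) :
    (regY ^ n) (Finsupp.single p c) = Finsupp.single (p.1, p.2 + n) c := by
  induction n with
  | zero => simp
  | succ n ih => rw [pow_succ', Module.End.mul_apply, ih, regY_single, add_assoc]

theorem regularRep_monomial (p : ℕ × ℕ) :
    regularRep q (monomial q p) (Finsupp.single 0 1) = Finsupp.single p 1 := by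
  simp [regularRep, monomial, Module.End.mul_apply, Prod.zero_eq_mk, regX_pow_single,
    regY_pow_single]

theorem linearIndependent_monomial : LinearIndependent k (monomial q) := by
  refine LinearIndependent.of_comp
    ((LinearMap.applyₗ (Finsupp.single 0 1)).comp (regularRep q).toLinearMap) ?_
  convert Finsupp.linearIndependent_single_one k (ℕ × ℕ) with p
  exact regularRep_monomial q p

end RegularRepresentation

section Basis

variable (q : k)

noncomputable def basisMonomial : Module.Basis (ℕ × ℕ) k (QPlane k q) :=
  .mk (linearIndependent_monomial q) (span_range_monomial q).ge

@[simp] theorem coe_basisMonomial : ⇑(basisMonomial q) = monomial q :=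
  Module.Basis.coe_mk _ _

@[simp] theorem repr_monomial (p : ℕ × ℕ) :
    (basisMonomial q).repr (monomial q p) = Finsupp.single p 1 := by
  rw [← coe_basisMonomial, Module.Basis.repr_self]

open Finset in
theorem repr_mul (a b : QPlane k q) (m n : ℕ) :
    (basisMonomial q).repr (a * b) (m, n) =
      ∑ i ∈ antidiagonal m, ∑ j ∈ antidiagonal n,
        q ^ (i.1 * j.2) * (basisMonomial q).repr a (i.1, j.1) *
          (basisMonomial q).repr b (i.2, j.2) := by
  set e := basisMonomial q
  let c (p : ℕ × ℕ) : QPlane k q →ₗ[k] k := Finsupp.lapply p ∘ₗ e.repr.toLinearMap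
  suffices key : (LinearMap.mul k (QPlane k q)).compr₂ (c (m, n)) =
      ∑ i ∈ antidiagonal m, ∑ j ∈ antidiagonal n,
        q ^ (i.1 * j.2) • (LinearMap.mul k k).compl₁₂ (c (i.1, j.1)) (c (i.2, j.2)) by
    simpa [c, mul_assoc] using LinearMap.congr_fun₂ key a b
  refine LinearMap.ext_basis e e ?_
  rintro ⟨p₁, p₂⟩ ⟨r₁, r₂⟩
  have hterm : ∀ z : (ℕ × ℕ) × (ℕ × ℕ), q ^ (z.1.1 * z.2.2) *
      (Finsupp.single (p₁, p₂) 1 (z.1.1, z.2.1) * Finsupp.single (r₁, r₂) (1 : k) (z.1.2, z.2.2)) =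
      if z = ((p₁, r₁), (p₂, r₂)) then q ^ (p₁ * r₂) else 0 := by
    rintro ⟨⟨x₁, x₂⟩, ⟨y₁, y₂⟩⟩
    simp only [Finsupp.single_apply, Prod.mk.injEq]
    split_ifs <;> grind
  simp only [c, e, LinearMap.compr₂_apply, LinearMap.mul_apply', coe_basisMonomial,
    monomial_mul_monomial, LinearMap.coe_comp, Function.comp_apply, LinearEquiv.coe_coe, map_smul,
    repr_monomial, Finsupp.lapply_apply, LinearMap.sum_apply, LinearMap.smul_apply,
    LinearMap.compl₁₂_apply, smul_eq_mul]
  rw [← Finset.sum_product', Finset.sum_congr rfl fun z _ => hterm z, Finset.sum_ite_eq']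
  simp [Finsupp.single_apply]

theorem repr_one : (basisMonomial q).repr 1 = Finsupp.single 0 1 := by
  rw [← monomial_zero, repr_monomial]

theorem repr_X : (basisMonomial q).repr (X q) = Finsupp.single (1, 0) 1 := by
  rw [← repr_monomial, monomial, pow_zero, pow_one, one_mul]

theorem repr_Y : (basisMonomial q).repr (Y q) = Finsupp.single (0, 1) 1 := by
  rw [← repr_monomial, monomial, pow_zero, pow_one, mul_one]

variable {q} (a b : QPlane k q)

theorem repr_mul_one_zero : (basisMonomial q).repr (a * b) (1, 0) =
    (basisMonomial q).repr a (0, 0) * (basisMonomial q).repr b (1, 0) +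
      (basisMonomial q).repr a (1, 0) * (basisMonomial q).repr b (0, 0) := by
  simp [repr_mul, Finset.Nat.sum_antidiagonal_succ]

theorem repr_mul_zero_one : (basisMonomial q).repr (a * b) (0, 1) =
    (basisMonomial q).repr a (0, 0) * (basisMonomial q).repr b (0, 1) +
      (basisMonomial q).repr a (0, 1) * (basisMonomial q).repr b (0, 0) := by
  simp [repr_mul, Finset.Nat.sum_antidiagonal_succ]

theorem repr_mul_one_one : (basisMonomial q).repr (a * b) (1, 1) =
    (basisMonomial q).repr a (0, 0) * (basisMonomial q).repr b (1, 1) +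
      (basisMonomial q).repr a (0, 1) * (basisMonomial q).repr b (1, 0) +
      q * (basisMonomial q).repr a (1, 0) * (basisMonomial q).repr b (0, 1) +
      (basisMonomial q).repr a (1, 1) * (basisMonomial q).repr b (0, 0) := by
  simp [repr_mul, Finset.Nat.sum_antidiagonal_succ]
  ring

end Basis

section Tangent

variable {q : k}

/-- Since `a ↦ (a₁₀, a₀₁)` is a derivation at the augmentation `a ↦ a₀₀` (`repr_mul_one_zero`),
the elements whose linear part is killed by the functional `(α, β)` form a subalgebra. -/
noncomputable def tangentSubalgebra (α β : k) : Subalgebra k (QPlane k q) where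
  carrier := {a | α * (basisMonomial q).repr a (1, 0) + β * (basisMonomial q).repr a (0, 1) = 0}
  mul_mem' {a b} ha hb := by
    simp only [Set.mem_ofPred_eq, repr_mul_one_zero, repr_mul_zero_one] at ha hb ⊢
    linear_combination (basisMonomial q).repr a (0, 0) * hb + (basisMonomial q).repr b (0, 0) * ha
  add_mem' {a b} ha hb := by
    simp only [Set.mem_ofPred_eq, map_add, Finsupp.add_apply] at ha hb ⊢
    linear_combination ha + hb
  algebraMap_mem' r := by
    simp [Algebra.algebraMap_eq_smul_one, repr_one]

theorem eq_zero_of_mem_tangentSubalgebra {u v : QPlane k q} (hgen : Algebra.adjoin k {u, v} = ⊤)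
    {α β : k} (hu : u ∈ tangentSubalgebra α β) (hv : v ∈ tangentSubalgebra α β) :
    α = 0 ∧ β = 0 := by
  have hle : ⊤ ≤ tangentSubalgebra (q := q) α β :=
    hgen ▸ Algebra.adjoin_le (Set.pair_subset hu hv)
  have hX : X q ∈ tangentSubalgebra α β := hle trivial
  have hY : Y q ∈ tangentSubalgebra α β := hle trivial
  simpa [tangentSubalgebra, repr_X, repr_Y] using And.intro hX hY

theorem jacobian_ne_zero {u v : QPlane k q} (hgen : Algebra.adjoin k {u, v} = ⊤) :
    (basisMonomial q).repr u (1, 0) * (basisMonomial q).repr v (0, 1) -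
      (basisMonomial q).repr u (0, 1) * (basisMonomial q).repr v (1, 0) ≠ 0 := by
  set u₁ := (basisMonomial q).repr u (1, 0)
  set u₂ := (basisMonomial q).repr u (0, 1)
  set v₁ := (basisMonomial q).repr v (1, 0)
  set v₂ := (basisMonomial q).repr v (0, 1)
  intro hdet
  have tangent {α β : k} (hu : α * u₁ + β * u₂ = 0) (hv : α * v₁ + β * v₂ = 0) :=
    eq_zero_of_mem_tangentSubalgebra hgen (α := α) (β := β) hu hv
  obtain ⟨-, hv₁⟩ := tangent (α := v₂) (β := -v₁) (by linear_combination hdet) (by ring)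
  obtain ⟨-, hu₁⟩ := tangent (α := u₂) (β := -u₁) (by ring) (by linear_combination -hdet)
  exact one_ne_zero (tangent (α := 1) (β := 0) (by simp [neg_eq_zero.mp hu₁])
    (by simp [neg_eq_zero.mp hv₁])).1

end Tangent

section Axes

variable (q : k)

noncomputable def restrictYAxis : QPlane k q →ₐ[k] Polynomial k :=
  lift 0 Polynomial.X (by simp)

noncomputable def restrictXAxis : QPlane k q →ₐ[k] Polynomial k :=
  lift Polynomial.X 0 (by simp)

theorem coeff_restrictYAxis (a : QPlane k q) (j : ℕ) :
    (restrictYAxis q a).coeff j = (basisMonomial q).repr a (0, j) := by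
  have key : Polynomial.lcoeff k j ∘ₗ (restrictYAxis q).toLinearMap =
      Finsupp.lapply (0, j) ∘ₗ (basisMonomial q).repr.toLinearMap := by
    refine (basisMonomial q).ext fun p => ?_
    simp only [LinearMap.coe_comp, Function.comp_apply, coe_basisMonomial, LinearEquiv.coe_coe,
      repr_monomial, Finsupp.lapply_apply, AlgHom.toLinearMap_apply, Polynomial.lcoeff_apply]
    rcases p with ⟨_ | i, j'⟩ <;>
      simp [restrictYAxis, monomial, Finsupp.single_apply, Polynomial.coeff_X_pow, eq_comm]
  exact LinearMap.congr_fun key a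

theorem coeff_restrictXAxis (a : QPlane k q) (i : ℕ) :
    (restrictXAxis q a).coeff i = (basisMonomial q).repr a (i, 0) := by
  have key : Polynomial.lcoeff k i ∘ₗ (restrictXAxis q).toLinearMap =
      Finsupp.lapply (i, 0) ∘ₗ (basisMonomial q).repr.toLinearMap := by
    refine (basisMonomial q).ext fun p => ?_
    simp only [LinearMap.coe_comp, Function.comp_apply, coe_basisMonomial, LinearEquiv.coe_coe,
      repr_monomial, Finsupp.lapply_apply, AlgHom.toLinearMap_apply, Polynomial.lcoeff_apply]
    rcases p with ⟨i', _ | j⟩ <;>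
      simp [restrictXAxis, monomial, Finsupp.single_apply, Polynomial.coeff_X_pow, eq_comm]
  exact LinearMap.congr_fun key a

end Axes

theorem eq_or_eq_inv_of_mul_eq_smul_mul {w c : k} (hc : c ≠ 1) {u v : QPlane k w}
    (huv : u * v = c • (v * u)) (hgen : Algebra.adjoin k {u, v} = ⊤) : w = c ∨ w = c⁻¹ := by
  have hdet := jacobian_ne_zero hgen
  have h11 := congrArg (fun a => (basisMonomial w).repr a (1, 1)) huv
  simp only [map_smul, Finsupp.smul_apply, smul_eq_mul, repr_mul_one_one] at h11
  have onYAxis {a : QPlane k w} (ha : restrictYAxis w a = 0) (j : ℕ) :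
      (basisMonomial w).repr a (0, j) = 0 := by
    rw [← coeff_restrictYAxis, ha, Polynomial.coeff_zero]
  have onXAxis {a : QPlane k w} (ha : restrictXAxis w a = 0) (i : ℕ) :
      (basisMonomial w).repr a (i, 0) = 0 := by
    rw [← coeff_restrictXAxis, ha, Polynomial.coeff_zero]
  rcases (restrictYAxis w).eq_zero_or_eq_zero_of_mul_eq_smul_mul hc huv with hu | hv <;>
    rcases (restrictXAxis w).eq_zero_or_eq_zero_of_mul_eq_smul_mul hc huv with hu' | hv'
  · simp [onYAxis hu, onXAxis hu'] at hdet
  · simp only [onYAxis hu, onXAxis hv', zero_mul, mul_zero, zero_add, add_zero, sub_zero]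
      at h11 hdet
    left
    exact mul_right_cancel₀ hdet (by linear_combination h11)
  · simp only [onYAxis hv, onXAxis hu', zero_mul, mul_zero, zero_add, add_zero, zero_sub]
      at h11 hdet
    right
    exact eq_inv_of_mul_eq_one_left
      (mul_right_cancel₀ (neg_ne_zero.mp hdet) (by linear_combination -h11))
  · simp [onYAxis hv, onXAxis hv'] at hdet

theorem eq_or_eq_inv_of_algEquiv {q q' : k} (hq : q ≠ 1) (e : QPlane k q ≃ₐ[k] QPlane k q') :
    q' = q ∨ q' = q⁻¹ := by
  refine eq_or_eq_inv_of_mul_eq_smul_mul hq (u := e (X q)) (v := e (Y q)) ?_ ?_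
  · rw [← map_mul, X_mul_Y, map_smul, map_mul]
  · rw [← Set.image_pair, ← e.coe_toAlgHom, ← AlgHom.map_adjoin, adjoin_X_Y, Algebra.map_top,
      AlgHom.range_eq_top]
    exact e.surjective

end QPlane

theorem qplane_iso_iff_general {k : Type*} [Field k] (q q' : k) (hq : q ≠ 0) :
    Nonempty (QPlane k q ≃ₐ[k] QPlane k q') ↔ q' = q ∨ q' = q⁻¹ := by
  constructor
  · rintro ⟨e⟩
    by_cases hq₁ : q = 1
    · subst hq₁
      by_cases hq'₁ : q' = 1
      · exact .inl hq'₁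
      · simpa [eq_comm, inv_eq_one] using QPlane.eq_or_eq_inv_of_algEquiv hq'₁ e.symm
    · exact QPlane.eq_or_eq_inv_of_algEquiv hq₁ e
  · rintro (rfl | rfl)
    exacts [⟨.refl⟩, ⟨QPlane.swapEquiv hq⟩]

/-- The quantum planes `O_q(k^2)` and `O_{q'}(k^2)` are isomorphic as
`k`-algebras iff `q' = q` or `q' = q⁻¹`. -/
theorem qplane_iso_iff {k : Type*} [Field k] (q q' : k) (hq : q ≠ 0) (hq' : q' ≠ 0) :
    Nonempty (QPlane k q ≃ₐ[k] QPlane k q') ↔ q' = q ∨ q' = q⁻¹ :=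
  qplane_iso_iff_general q q' hq
end
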